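/- arXiv:2510.01387 — 5 statements merged into one kernel-verified Lean document; each statement's English description precedes it below -/
import Mathlib

section
/- There is a universal constant C > 0 with the following property. In any multi-follower Bayesian Stackelberg game, consider the learning algorithm that picks an arbitrary x^1 ∈ Δ([L]) and, for every round t ≥ 2, picks x^t ∈ argmax_{x ∈ Δ([L])} Σ_{s=1}^{t−1} u(x, br(θ^s, x)), where θ^1, θ^2, ... are i.i.d. samples from D observed after each round. Then its expected regret satisfies E[Σ_{t=1}^T (sup_{x ∈ Δ([L])} U_D(x) − U_D(x^t))] ≤ C·sqrt(K^n·T). -/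
open Finset

noncomputable section

/-- Leader's expected utility of mixed strategy `x` against joint follower action `a`:
`u(x, a) = ∑ ℓ, x ℓ * u ℓ a`. -/
def leaderU {n L A : ℕ} (u : Fin L → (Fin n → Fin A) → ℝ)
    (x : Fin L → ℝ) (a : Fin n → Fin A) : ℝ :=
  ∑ ℓ, x ℓ * u ℓ a

/-- Follower's expected utility of playing `a` under leader mixed strategy `x` when the
follower has type `k`: `v(x, a, k) = ∑ ℓ, x ℓ * v ℓ a k`. -/
def followerU {L A K : ℕ} (v : Fin L → Fin A → Fin K → ℝ)
    (x : Fin L → ℝ) (a : Fin A) (k : Fin K) : ℝ :=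
  ∑ ℓ, x ℓ * v ℓ a k

/-- `br` is a joint best-response function: each coordinate maximizes the corresponding
follower's expected utility, and among coordinatewise maximizers the leader's expected
utility is maximized (ties broken in favor of the leader). -/
def IsBR {n L A K : ℕ} (u : Fin L → (Fin n → Fin A) → ℝ)
    (v : Fin n → Fin L → Fin A → Fin K → ℝ)
    (br : (Fin n → Fin K) → (Fin L → ℝ) → (Fin n → Fin A)) : Prop :=
  ∀ (θ : Fin n → Fin K) (x : Fin L → ℝ),
    (∀ (i : Fin n) (a : Fin A),
        followerU (v i) x a (θ i) ≤ followerU (v i) x (br θ x i) (θ i)) ∧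
    (∀ b : Fin n → Fin A,
        (∀ (i : Fin n) (a : Fin A),
            followerU (v i) x a (θ i) ≤ followerU (v i) x (b i) (θ i)) →
        leaderU u x b ≤ leaderU u x (br θ x))

/-- Leader's expected utility `U_D(x) = E_{θ ∼ D}[u(x, br(θ, x))]`. -/
def UD {n L A K : ℕ} (D : (Fin n → Fin K) → ℝ)
    (u : Fin L → (Fin n → Fin A) → ℝ)
    (br : (Fin n → Fin K) → (Fin L → ℝ) → (Fin n → Fin A))
    (x : Fin L → ℝ) : ℝ :=
  ∑ θ, D θ * leaderU u x (br θ x)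

/-- `D` is a probability distribution on the finite type `α`. -/
def IsDist {α : Type*} [Fintype α] (D : α → ℝ) : Prop :=
  (∀ a, 0 ≤ D a) ∧ ∑ a, D a = 1

/-- The best-response region `R(W)`: leader strategies under which the followers'
joint best response agrees with the matrix `W`. -/
def BRregion {n L A K : ℕ}
    (br : (Fin n → Fin K) → (Fin L → ℝ) → (Fin n → Fin A))
    (W : Fin n → Fin K → Fin A) : Set (Fin L → ℝ) :=
  {x | x ∈ stdSimplex ℝ (Fin L) ∧ ∀ θ : Fin n → Fin K, br θ x = fun i => W i (θ i)}

/-- The optimal leader utility `sup_{x ∈ Δ([L])} U_D(x)`. -/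
def optUD {n L A K : ℕ} (D : (Fin n → Fin K) → ℝ)
    (u : Fin L → (Fin n → Fin A) → ℝ)
    (br : (Fin n → Fin K) → (Fin L → ℝ) → (Fin n → Fin A)) : ℝ :=
  sSup (UD D u br '' stdSimplex ℝ (Fin L))


set_option linter.unusedSectionVars false

section mfbsg

variable {Θ : Type*} [Fintype Θ] [DecidableEq Θ] {T : ℕ} {D : Θ → ℝ}

/-- product weight -/
def myP (D : Θ → ℝ) (ω : Fin T → Θ) : ℝ := ∏ s, D (ω s)

/-- expectation -/
def myE (D : Θ → ℝ) (T : ℕ) (f : (Fin T → Θ) → ℝ) : ℝ := ∑ ω, myP D ω * f ω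

lemma myP_nonneg (hD : ∀ θ, 0 ≤ D θ) (ω : Fin T → Θ) : 0 ≤ myP D ω :=
  Finset.prod_nonneg fun _ _ => hD _

lemma myE_master (F : Fin T → Θ → ℝ) :
    myE D T (fun ω => ∏ s, F s (ω s)) = ∏ s, ∑ θ, D θ * F s θ := by
  rw [Fintype.prod_sum]
  unfold myE myP
  exact Finset.sum_congr rfl fun ω _ => (Finset.prod_mul_distrib).symm

lemma myE_one (h1 : ∑ θ, D θ = 1) : myE D T (fun _ => 1) = 1 := by
  have := myE_master (D := D) (T := T) (fun _ _ => (1:ℝ))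
  simpa [h1] using this

lemma myE_coord (h1 : ∑ θ, D θ = 1) (i : Fin T) (f : Θ → ℝ) :
    myE D T (fun ω => f (ω i)) = ∑ θ, D θ * f θ := by
  have := myE_master (D := D) (T := T) (fun s θ => if s = i then f θ else 1)
  simp only [Finset.prod_ite_eq', Finset.mem_univ, if_true] at this
  rw [this, Finset.prod_eq_single i (fun b _ hb => by simp [hb, h1]) (by simp)]
  simp

lemma myE_coord2 (h1 : ∑ θ, D θ = 1) {i j : Fin T} (hij : i ≠ j) (f g : Θ → ℝ) :
    myE D T (fun ω => f (ω i) * g (ω j)) = (∑ θ, D θ * f θ) * (∑ θ, D θ * g θ) := by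
  have key : ∀ ω : Fin T → Θ,
      (∏ s, (if s = i then f (ω s) else if s = j then g (ω s) else 1)) = f (ω i) * g (ω j) := by
    intro ω
    rw [← Finset.mul_prod_erase univ _ (Finset.mem_univ i)]
    simp only [if_pos rfl]
    congr 1
    rw [← Finset.mul_prod_erase _ _ (Finset.mem_erase.2 ⟨Ne.symm hij, Finset.mem_univ j⟩)]
    rw [if_neg (Ne.symm hij), if_pos rfl]
    rw [Finset.prod_eq_one, mul_one]
    intro s hs
    simp only [Finset.mem_erase] at hs
    simp [hs.1, hs.2.1]
  have := myE_master (D := D) (T := T) (fun s θ => if s = i then f θ else if s = j then g θ else 1)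
  rw [show (fun ω : Fin T → Θ => ∏ s, (if s = i then f (ω s) else if s = j then g (ω s) else 1))
      = fun ω => f (ω i) * g (ω j) from funext key] at this
  rw [this]
  rw [← Finset.mul_prod_erase univ _ (Finset.mem_univ i)]
  simp only [if_pos rfl]
  congr 1
  rw [← Finset.mul_prod_erase _ _ (Finset.mem_erase.2 ⟨Ne.symm hij, Finset.mem_univ j⟩)]
  rw [Finset.prod_eq_one (fun s hs => by
    simp only [Finset.mem_erase] at hs
    simp [hs.1, hs.2.1, h1]), mul_one]
  simp [Ne.symm hij]

lemma myE_sum {ι : Type*} (s : Finset ι) (f : ι → (Fin T → Θ) → ℝ) :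
    myE D T (fun ω => ∑ i ∈ s, f i ω) = ∑ i ∈ s, myE D T (f i) := by
  unfold myE
  rw [Finset.sum_comm]
  exact Finset.sum_congr rfl fun ω _ => by rw [Finset.mul_sum]

lemma myE_mono (hD : ∀ θ, 0 ≤ D θ) {f g : (Fin T → Θ) → ℝ} (h : ∀ ω, f ω ≤ g ω) :
    myE D T f ≤ myE D T g :=
  Finset.sum_le_sum fun ω _ => mul_le_mul_of_nonneg_left (h ω) (myP_nonneg hD ω)


-- centered indicator
def myf (θ0 : Θ) (D : Θ → ℝ) (θ : Θ) : ℝ := (if θ = θ0 then 1 else 0) - D θ0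

lemma myf_mean (h1 : ∑ θ, D θ = 1) (θ0 : Θ) : ∑ θ, D θ * myf θ0 D θ = 0 := by
  unfold myf
  simp only [mul_sub, mul_ite, mul_one, mul_zero, Finset.sum_sub_distrib,
    Finset.sum_ite_eq', Finset.mem_univ, if_true, ← Finset.sum_mul, h1]
  ring

lemma myf_var (h0 : ∀ θ, 0 ≤ D θ) (h1 : ∑ θ, D θ = 1) (θ0 : Θ) :
    ∑ θ, D θ * (myf θ0 D θ)^2 ≤ D θ0 := by
  have key : ∀ θ, D θ * (myf θ0 D θ)^2
      = D θ * (D θ0)^2 + (if θ = θ0 then D θ * (1 - 2 * D θ0) else 0) := by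
    intro θ; unfold myf; split <;> ring
  rw [Finset.sum_congr rfl fun θ _ => key θ, Finset.sum_add_distrib, ← Finset.sum_mul, h1,
    Finset.sum_ite_eq' univ θ0, if_pos (Finset.mem_univ θ0)]
  nlinarith [sq_nonneg (D θ0), h0 θ0]

lemma myE_sq_sum (h0 : ∀ θ, 0 ≤ D θ) (h1 : ∑ θ, D θ = 1) (θ0 : Θ) {m : ℕ} (hm : m ≤ T) :
    myE D T (fun ω => (∑ s : Fin m, myf θ0 D (ω (Fin.castLE hm s)))^2) ≤ m * D θ0 := by
  have expand : ∀ ω : Fin T → Θ, (∑ s : Fin m, myf θ0 D (ω (Fin.castLE hm s)))^2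
      = ∑ s : Fin m, ∑ s' : Fin m,
          myf θ0 D (ω (Fin.castLE hm s)) * myf θ0 D (ω (Fin.castLE hm s')) := by
    intro ω; rw [sq, Finset.sum_mul_sum]
  calc myE D T (fun ω => (∑ s : Fin m, myf θ0 D (ω (Fin.castLE hm s)))^2)
      = ∑ s : Fin m, ∑ s' : Fin m, myE D T (fun ω =>
          myf θ0 D (ω (Fin.castLE hm s)) * myf θ0 D (ω (Fin.castLE hm s'))) := by
        rw [show (fun ω : Fin T → Θ => (∑ s : Fin m, myf θ0 D (ω (Fin.castLE hm s)))^2)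
            = _ from funext expand, myE_sum]
        exact Finset.sum_congr rfl fun s _ => myE_sum _ _
    _ ≤ ∑ s : Fin m, ∑ s' : Fin m, (if s = s' then D θ0 else 0) := by
        refine Finset.sum_le_sum fun s _ => Finset.sum_le_sum fun s' _ => ?_
        by_cases hss : s = s'
        · subst hss
          rw [if_pos rfl]
          have hc := myE_coord (T := T) h1 (Fin.castLE hm s)
            (fun θ => myf θ0 D θ * myf θ0 D θ)
          refine le_trans (le_of_eq hc) ?_
          have := myf_var h0 h1 θ0
          simpa [pow_two] using this
        · have hne : Fin.castLE hm s ≠ Fin.castLE hm s' := by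
            simp only [ne_eq, Fin.castLE_inj]; exact hss
          rw [myE_coord2 h1 hne, myf_mean h1, zero_mul, if_neg hss]
    _ = m * D θ0 := by simp [Finset.sum_ite_eq', mul_comm]

lemma myE_abs_le (h0 : ∀ θ, 0 ≤ D θ) (h1 : ∑ θ, D θ = 1) (f : (Fin T → Θ) → ℝ) {B : ℝ}
    (hB : 0 ≤ B) (h2 : myE D T (fun ω => f ω ^ 2) ≤ B) :
    myE D T (fun ω => |f ω|) ≤ Real.sqrt B := by
  have cs := Finset.sum_mul_sq_le_sq_mul_sq univ (fun ω : Fin T → Θ => Real.sqrt (myP D ω))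
      (fun ω => Real.sqrt (myP D ω) * |f ω|)
  have e1 : ∀ ω : Fin T → Θ, Real.sqrt (myP D ω) * (Real.sqrt (myP D ω) * |f ω|)
      = myP D ω * |f ω| := fun ω => by
    rw [← mul_assoc, Real.mul_self_sqrt (myP_nonneg h0 ω)]
  have e2 : ∀ ω : Fin T → Θ, Real.sqrt (myP D ω) ^ 2 = myP D ω := fun ω =>
    Real.sq_sqrt (myP_nonneg h0 ω)
  have e3 : ∀ ω : Fin T → Θ, (Real.sqrt (myP D ω) * |f ω|) ^ 2 = myP D ω * f ω ^ 2 := fun ω => by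
    rw [mul_pow, e2, sq_abs]
  simp only [e1, e2, e3] at cs
  have hsum : ∑ ω : Fin T → Θ, myP D ω = 1 := by
    have := myE_one (T := T) h1; unfold myE at this; simpa using this
  rw [hsum, one_mul] at cs
  have hEabs : myE D T (fun ω => |f ω|) ^ 2 ≤ B := le_trans cs h2
  have hnn : 0 ≤ myE D T (fun ω => |f ω|) :=
    Finset.sum_nonneg fun ω _ => mul_nonneg (myP_nonneg h0 ω) (abs_nonneg _)
  have := Real.sqrt_le_sqrt hEabs
  rwa [Real.sqrt_sq hnn] at this

lemma myE_abs_sum (h0 : ∀ θ, 0 ≤ D θ) (h1 : ∑ θ, D θ = 1) (θ0 : Θ) {m : ℕ} (hm : m ≤ T) :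
    myE D T (fun ω => |∑ s : Fin m, myf θ0 D (ω (Fin.castLE hm s))|)
      ≤ Real.sqrt (m * D θ0) :=
  myE_abs_le h0 h1 _ (mul_nonneg (Nat.cast_nonneg m) (h0 θ0)) (myE_sq_sum h0 h1 θ0 hm)


lemma myE_const_mul (c : ℝ) (f : (Fin T → Θ) → ℝ) :
    myE D T (fun ω => c * f ω) = c * myE D T f := by
  unfold myE; rw [Finset.mul_sum]; exact Finset.sum_congr rfl fun ω _ => by ring

lemma my_mul_le_abs {a c : ℝ} (h0 : 0 ≤ c) (h1 : c ≤ 1) : a * c ≤ |a| := by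
  nlinarith [le_abs_self a, abs_nonneg a]

lemma my_sqrt_sum_le (M : ℕ) :
    ∑ m ∈ Finset.range M, (1:ℝ)/Real.sqrt (m+1) ≤ 2 * Real.sqrt M := by
  induction M with
  | zero => simp
  | succ M ih =>
    rw [Finset.sum_range_succ]
    have hpos : (0:ℝ) < Real.sqrt ((M:ℝ)+1) := Real.sqrt_pos.2 (by positivity)
    have ha : Real.sqrt ((M:ℝ)+1)^2 = (M:ℝ)+1 := Real.sq_sqrt (by positivity)
    have hb : Real.sqrt (M:ℝ)^2 = (M:ℝ) := Real.sq_sqrt (by positivity)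
    have hmono : Real.sqrt (M:ℝ) ≤ Real.sqrt ((M:ℝ)+1) := Real.sqrt_le_sqrt (by linarith)
    have hnn : 0 ≤ Real.sqrt (M:ℝ) := Real.sqrt_nonneg _
    have key : (1:ℝ)/Real.sqrt ((M:ℝ)+1)
        ≤ 2*(Real.sqrt ((M:ℝ)+1) - Real.sqrt (M:ℝ)) := by
      rw [div_le_iff₀ hpos]
      nlinarith
    have hcast : ((M+1 : ℕ) : ℝ) = (M:ℝ)+1 := by push_cast; ring
    rw [hcast]
    linarith

lemma my_sum_sqrt_le {α : Type*} [Fintype α] (D : α → ℝ) (h0 : ∀ a, 0 ≤ D a)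
    (h1 : ∑ a, D a = 1) :
    ∑ a, Real.sqrt (D a) ≤ Real.sqrt (Fintype.card α) := by
  have cs := Finset.sum_mul_sq_le_sq_mul_sq univ (fun _ : α => (1:ℝ))
    (fun a => Real.sqrt (D a))
  simp only [one_mul, one_pow, Finset.sum_const, Finset.card_univ, nsmul_eq_mul,
    mul_one] at cs
  have e : ∑ a, Real.sqrt (D a) ^ 2 = 1 := by
    rw [Finset.sum_congr rfl fun a _ => Real.sq_sqrt (h0 a), h1]
  rw [e, mul_one] at cs
  have hnn : 0 ≤ ∑ a, Real.sqrt (D a) :=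
    Finset.sum_nonneg fun a _ => Real.sqrt_nonneg _
  have := Real.sqrt_le_sqrt cs
  rwa [Real.sqrt_sq hnn] at this

lemma my_count {m : ℕ} (hm : m ≤ T) (ω : Fin T → Θ) (g : Θ → ℝ) :
    ∑ s : Fin m, g (ω (Fin.castLE hm s))
      = ∑ θ0, (∑ s : Fin m, if ω (Fin.castLE hm s) = θ0 then (1:ℝ) else 0) * g θ0 := by
  have key : ∀ s : Fin m, g (ω (Fin.castLE hm s))
      = ∑ θ0, (if ω (Fin.castLE hm s) = θ0 then (1:ℝ) else 0) * g θ0 := by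
    intro s
    simp [ite_mul, Finset.sum_ite_eq]
  rw [Finset.sum_congr rfl fun s _ => key s, Finset.sum_comm]
  exact Finset.sum_congr rfl fun θ0 _ => (Finset.sum_mul _ _ _).symm

lemma my_sum_myf {m : ℕ} (hm : m ≤ T) (ω : Fin T → Θ) (θ0 : Θ) :
    ∑ s : Fin m, myf θ0 D (ω (Fin.castLE hm s))
      = (∑ s : Fin m, if ω (Fin.castLE hm s) = θ0 then (1:ℝ) else 0) - m * D θ0 := by
  unfold myf
  rw [Finset.sum_sub_distrib, Finset.sum_const, Finset.card_univ, Fintype.card_fin,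
    nsmul_eq_mul]


end mfbsg

set_option maxHeartbeats 2000000

/-- The follow-the-empirical-optimum algorithm under type feedback has
expected regret at most `C·√(K^n·T)` in any multi-follower Bayesian Stackelberg game,
for a universal constant `C`. -/
theorem stmt4 :
    ∃ C : ℝ, 0 < C ∧
      ∀ (n L A K T : ℕ), 1 ≤ n → 2 ≤ L → 1 ≤ A → 1 ≤ K → 1 ≤ T →
      ∀ (D : (Fin n → Fin K) → ℝ), IsDist D →
      ∀ (u : Fin L → (Fin n → Fin A) → ℝ), (∀ ℓ a, u ℓ a ∈ Set.Icc (0 : ℝ) 1) →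
      ∀ (v : Fin n → Fin L → Fin A → Fin K → ℝ),
        (∀ i ℓ a k, v i ℓ a k ∈ Set.Icc (0 : ℝ) 1) →
      ∀ (br : (Fin n → Fin K) → (Fin L → ℝ) → (Fin n → Fin A)), IsBR u v br →
      ∀ (alg : (t : ℕ) → (Fin t → (Fin n → Fin K)) → (Fin L → ℝ)),
        -- the algorithm always plays a mixed strategy
        (∀ t h, alg t h ∈ stdSimplex ℝ (Fin L)) →
        -- from round 2 on, it plays an empirically optimal strategy
        (∀ (t : ℕ), 1 ≤ t → ∀ (h : Fin t → (Fin n → Fin K)),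
          ∀ y ∈ stdSimplex ℝ (Fin L),
            ∑ s, leaderU u y (br (h s) y) ≤
              ∑ s, leaderU u (alg t h) (br (h s) (alg t h))) →
      -- expected regret bound
      (∑ ω : Fin T → (Fin n → Fin K), (∏ s, D (ω s)) *
          ∑ t : Fin T, (optUD D u br -
            UD D u br (alg t.val (fun s : Fin t.val => ω (Fin.castLE t.isLt.le s)))))
        ≤ C * Real.sqrt (((K ^ n * T : ℕ) : ℝ)) := by
  refine ⟨5, by norm_num, ?_⟩
  intro n L A K T hn hL hA hK hT D hD u hu v hv br hbr alg halg1 halg2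
  obtain ⟨hD0, hD1⟩ := hD
  -- basic bounds on leader utility
  have hf01 : ∀ x ∈ stdSimplex ℝ (Fin L), ∀ θ : Fin n → Fin K,
      0 ≤ leaderU u x (br θ x) ∧ leaderU u x (br θ x) ≤ 1 := by
    intro x hx θ
    constructor
    · exact Finset.sum_nonneg fun ℓ _ => mul_nonneg (hx.1 ℓ) (hu ℓ _).1
    · calc (∑ ℓ, x ℓ * u ℓ (br θ x)) ≤ ∑ ℓ, x ℓ * 1 :=
            Finset.sum_le_sum fun ℓ _ =>
              mul_le_mul_of_nonneg_left (hu ℓ _).2 (hx.1 ℓ)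
        _ = 1 := by simp [hx.2]
  have hUD0 : ∀ x ∈ stdSimplex ℝ (Fin L), 0 ≤ UD D u br x := fun x hx =>
    Finset.sum_nonneg fun θ _ => mul_nonneg (hD0 θ) (hf01 x hx θ).1
  have hUD1 : ∀ x ∈ stdSimplex ℝ (Fin L), UD D u br x ≤ 1 := by
    intro x hx
    calc UD D u br x ≤ ∑ θ, D θ * 1 :=
          Finset.sum_le_sum fun θ _ =>
            mul_le_mul_of_nonneg_left (hf01 x hx θ).2 (hD0 θ)
      _ = 1 := by simp [hD1]
  have hopt1 : optUD D u br ≤ 1 :=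
    Real.sSup_le (by rintro _ ⟨y, hy, rfl⟩; exact hUD1 y hy) zero_le_one
  -- pointwise per-round bound, m ≥ 1
  have round : ∀ t : Fin T, 1 ≤ t.val → ∀ ω : Fin T → (Fin n → Fin K),
      optUD D u br - UD D u br (alg t.val (fun s : Fin t.val => ω (Fin.castLE t.isLt.le s)))
        ≤ (2 / (t.val : ℝ)) *
          ∑ θ0, |∑ s : Fin t.val, myf θ0 D (ω (Fin.castLE t.isLt.le s))| := by
    intro t ht ω
    have hmT : t.val ≤ T := t.isLt.le
    set x := alg t.val (fun s : Fin t.val => ω (Fin.castLE t.isLt.le s)) with hxdef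
    have hx : x ∈ stdSimplex ℝ (Fin L) := halg1 _ _
    set N : (Fin n → Fin K) → ℝ :=
      fun θ0 => ∑ s : Fin t.val, if ω (Fin.castLE t.isLt.le s) = θ0 then (1:ℝ) else 0
      with hNdef
    set Err := ∑ θ0, |∑ s : Fin t.val, myf θ0 D (ω (Fin.castLE t.isLt.le s))| with hErrdef
    have hErr_eq : Err = ∑ θ0, |N θ0 - (t.val : ℝ) * D θ0| :=
      Finset.sum_congr rfl fun θ0 _ => by rw [my_sum_myf t.isLt.le]
    have hErr0 : 0 ≤ Err := Finset.sum_nonneg fun θ0 _ => abs_nonneg _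
    have hmpos : (0:ℝ) < (t.val : ℝ) := by exact_mod_cast ht
    -- multiplied-out UD
    have hUDm : ∀ z : Fin L → ℝ, (t.val : ℝ) * UD D u br z
        = ∑ θ0, ((t.val : ℝ) * D θ0) * leaderU u z (br θ0 z) := by
      intro z; unfold UD; rw [Finset.mul_sum]
      exact Finset.sum_congr rfl fun θ _ => by ring
    have hdev : ∀ z ∈ stdSimplex ℝ (Fin L), ∀ c : (Fin n → Fin K) → ℝ,
        ∑ θ0, c θ0 * leaderU u z (br θ0 z) ≤ ∑ θ0, |c θ0| := by
      intro z hz c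
      exact Finset.sum_le_sum fun θ0 _ =>
        my_mul_le_abs (hf01 z hz θ0).1 (hf01 z hz θ0).2
    have key : ∀ y ∈ stdSimplex ℝ (Fin L),
        (t.val : ℝ) * UD D u br y ≤ (t.val : ℝ) * UD D u br x + 2 * Err := by
      intro y hy
      have hAy := my_count t.isLt.le ω (fun θ0 => leaderU u y (br θ0 y))
      have hAx := my_count t.isLt.le ω (fun θ0 => leaderU u x (br θ0 x))
      have e1 : (t.val : ℝ) * UD D u br y
          - ∑ s : Fin t.val, leaderU u y (br (ω (Fin.castLE t.isLt.le s)) y)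
          = ∑ θ0, ((t.val : ℝ) * D θ0 - N θ0) * leaderU u y (br θ0 y) := by
        rw [hUDm y, hAy, ← Finset.sum_sub_distrib]
        exact Finset.sum_congr rfl fun θ _ => by ring
      have e2 : (∑ s : Fin t.val, leaderU u x (br (ω (Fin.castLE t.isLt.le s)) x))
          - (t.val : ℝ) * UD D u br x
          = ∑ θ0, (N θ0 - (t.val : ℝ) * D θ0) * leaderU u x (br θ0 x) := by
        rw [hUDm x, hAx, ← Finset.sum_sub_distrib]
        exact Finset.sum_congr rfl fun θ _ => by ring
      have b1 : ∑ θ0, ((t.val : ℝ) * D θ0 - N θ0) * leaderU u y (br θ0 y) ≤ Err := by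
        refine le_trans (hdev y hy _) (le_of_eq ?_)
        rw [hErr_eq]
        exact Finset.sum_congr rfl fun θ0 _ => abs_sub_comm _ _
      have b2 : ∑ θ0, (N θ0 - (t.val : ℝ) * D θ0) * leaderU u x (br θ0 x) ≤ Err := by
        refine le_trans (hdev x hx _) (le_of_eq ?_)
        rw [hErr_eq]
      have emp := halg2 t.val ht (fun s : Fin t.val => ω (Fin.castLE t.isLt.le s)) y hy
      rw [← hxdef] at emp
      linarith
    have hopt : optUD D u br ≤ UD D u br x + (2 / (t.val : ℝ)) * Err := by
      apply Real.sSup_le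
      · rintro _ ⟨y, hy, rfl⟩
        have hk := key y hy
        rw [div_mul_eq_mul_div, ← sub_le_iff_le_add', le_div_iff₀ hmpos]
        nlinarith [hk]
      · have := hUD0 x hx
        positivity
    linarith
  -- per-round expectation bound, m ≥ 1
  have roundE : ∀ t : Fin T, 1 ≤ t.val →
      myE D T (fun ω => optUD D u br -
          UD D u br (alg t.val (fun s : Fin t.val => ω (Fin.castLE t.isLt.le s))))
        ≤ 2 * Real.sqrt ((K:ℝ)^n) / Real.sqrt (t.val : ℝ) := by
    intro t ht
    have hmpos : (0:ℝ) < (t.val : ℝ) := by exact_mod_cast ht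
    have hst : Real.sqrt (t.val : ℝ) * Real.sqrt (t.val : ℝ) = (t.val : ℝ) :=
      Real.mul_self_sqrt hmpos.le
    have hstne : Real.sqrt (t.val : ℝ) ≠ 0 := by positivity
    have hcard : ((Fintype.card (Fin n → Fin K) : ℕ) : ℝ) = (K:ℝ)^n := by
      simp [Fintype.card_fun]
    calc myE D T (fun ω => optUD D u br -
            UD D u br (alg t.val (fun s : Fin t.val => ω (Fin.castLE t.isLt.le s))))
        ≤ myE D T (fun ω => (2 / (t.val : ℝ)) *
            ∑ θ0, |∑ s : Fin t.val, myf θ0 D (ω (Fin.castLE t.isLt.le s))|) :=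
          myE_mono hD0 (round t ht)
      _ = (2 / (t.val : ℝ)) * ∑ θ0, myE D T
            (fun ω => |∑ s : Fin t.val, myf θ0 D (ω (Fin.castLE t.isLt.le s))|) := by
          rw [myE_const_mul]
          congr 1
          exact myE_sum univ _
      _ ≤ (2 / (t.val : ℝ)) * ∑ θ0, Real.sqrt ((t.val : ℝ) * D θ0) := by
          refine mul_le_mul_of_nonneg_left
            (Finset.sum_le_sum fun θ0 _ => myE_abs_sum hD0 hD1 θ0 t.isLt.le)
            (by positivity)
      _ = (2 / (t.val : ℝ)) * Real.sqrt (t.val : ℝ) * ∑ θ0, Real.sqrt (D θ0) := by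
          rw [Finset.sum_congr rfl fun θ0 _ => Real.sqrt_mul (Nat.cast_nonneg t.val) (D θ0),
            ← Finset.mul_sum, ← mul_assoc]
      _ ≤ (2 / (t.val : ℝ)) * Real.sqrt (t.val : ℝ) * Real.sqrt ((K:ℝ)^n) := by
          refine mul_le_mul_of_nonneg_left ?_ (by positivity)
          have := my_sum_sqrt_le D hD0 hD1
          rwa [hcard] at this
      _ = 2 * Real.sqrt ((K:ℝ)^n) / Real.sqrt (t.val : ℝ) := by
          rw [eq_div_iff hstne]
          calc 2 / (t.val : ℝ) * Real.sqrt (t.val : ℝ) * Real.sqrt ((K:ℝ)^n)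
                * Real.sqrt (t.val : ℝ)
              = 2 / (t.val : ℝ) * (Real.sqrt (t.val : ℝ) * Real.sqrt (t.val : ℝ))
                * Real.sqrt ((K:ℝ)^n) := by ring
            _ = 2 * Real.sqrt ((K:ℝ)^n) := by rw [hst]; field_simp
  -- per-round expectation bound, any t
  have round0 : ∀ t : Fin T,
      myE D T (fun ω => optUD D u br -
          UD D u br (alg t.val (fun s : Fin t.val => ω (Fin.castLE t.isLt.le s))))
        ≤ 1 := by
    intro t
    have hpt : ∀ ω : Fin T → (Fin n → Fin K), optUD D u br -
        UD D u br (alg t.val (fun s : Fin t.val => ω (Fin.castLE t.isLt.le s))) ≤ 1 := by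
      intro ω
      have := hUD0 _ (halg1 t.val (fun s : Fin t.val => ω (Fin.castLE t.isLt.le s)))
      linarith
    exact le_trans (myE_mono hD0 hpt) (le_of_eq (myE_one hD1))
  -- assemble
  have hKn1 : (1:ℝ) ≤ (K:ℝ)^n := one_le_pow₀ (by exact_mod_cast hK)
  have hT1 : (1:ℝ) ≤ (T:ℝ) := by exact_mod_cast hT
  have hsKn : (0:ℝ) ≤ Real.sqrt ((K:ℝ)^n) := Real.sqrt_nonneg _
  have hmain : (1:ℝ) ≤ Real.sqrt ((K:ℝ)^n * T) := by
    rw [show (1:ℝ) = Real.sqrt 1 from (Real.sqrt_one).symm]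
    exact Real.sqrt_le_sqrt (by nlinarith)
  have hsplit : Real.sqrt ((K:ℝ)^n) * Real.sqrt (T:ℝ) = Real.sqrt ((K:ℝ)^n * T) :=
    (Real.sqrt_mul (by positivity) _).symm
  obtain ⟨T', rfl⟩ : ∃ T', T = T' + 1 := ⟨T - 1, (Nat.succ_pred_eq_of_pos hT).symm⟩
  calc (∑ ω : Fin (T'+1) → (Fin n → Fin K), (∏ s, D (ω s)) *
          ∑ t : Fin (T'+1), (optUD D u br -
            UD D u br (alg t.val (fun s : Fin t.val => ω (Fin.castLE t.isLt.le s)))))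
      = ∑ t : Fin (T'+1), myE D (T'+1) (fun ω => optUD D u br -
            UD D u br (alg t.val (fun s : Fin t.val => ω (Fin.castLE t.isLt.le s)))) := by
        rw [show (∑ ω : Fin (T'+1) → (Fin n → Fin K), (∏ s, D (ω s)) *
            ∑ t : Fin (T'+1), (optUD D u br -
              UD D u br (alg t.val (fun s : Fin t.val => ω (Fin.castLE t.isLt.le s)))))
            = myE D (T'+1) (fun ω => ∑ t : Fin (T'+1), (optUD D u br -
              UD D u br (alg t.val (fun s : Fin t.val => ω (Fin.castLE t.isLt.le s)))))
            from rfl]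
        exact myE_sum univ _
    _ ≤ ∑ t : Fin (T'+1), (if t.val = 0 then (1:ℝ)
          else 2 * Real.sqrt ((K:ℝ)^n) / Real.sqrt (t.val : ℝ)) := by
        refine Finset.sum_le_sum fun t _ => ?_
        by_cases h0 : t.val = 0
        · rw [if_pos h0]; exact round0 t
        · rw [if_neg h0]; exact roundE t (Nat.one_le_iff_ne_zero.2 h0)
    _ = ∑ m ∈ Finset.range (T'+1), (if m = 0 then (1:ℝ)
          else 2 * Real.sqrt ((K:ℝ)^n) / Real.sqrt (m : ℝ)) :=
        Fin.sum_univ_eq_sum_range (fun m : ℕ => if m = 0 then (1:ℝ) else 2 * Real.sqrt ((K:ℝ)^n) / Real.sqrt (m:ℝ)) (T'+1)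
    _ = 1 + ∑ m ∈ Finset.range T', 2 * Real.sqrt ((K:ℝ)^n) / Real.sqrt ((m:ℝ)+1) := by
        rw [Finset.sum_range_succ']
        rw [if_pos rfl, add_comm]
        congr 1
        refine Finset.sum_congr rfl fun m _ => ?_
        rw [if_neg (Nat.succ_ne_zero m)]
        push_cast
        ring_nf
    _ ≤ 1 + 2 * Real.sqrt ((K:ℝ)^n) * (2 * Real.sqrt (T':ℝ)) := by
        have e : ∑ m ∈ Finset.range T', 2 * Real.sqrt ((K:ℝ)^n) / Real.sqrt ((m:ℝ)+1)
            = 2 * Real.sqrt ((K:ℝ)^n) * ∑ m ∈ Finset.range T', 1 / Real.sqrt ((m:ℝ)+1) := by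
          rw [Finset.mul_sum]
          exact Finset.sum_congr rfl fun m _ => by ring
        rw [e]
        have := my_sqrt_sum_le T'
        nlinarith [this, hsKn, Real.sqrt_nonneg (T':ℝ)]
    _ ≤ 5 * Real.sqrt (((K ^ n * (T'+1) : ℕ) : ℝ)) := by
        have hc : (((K ^ n * (T'+1) : ℕ) : ℝ)) = (K:ℝ)^n * ((T'+1 : ℕ):ℝ) := by push_cast; ring
        rw [hc]
        have hT'le : Real.sqrt (T':ℝ) ≤ Real.sqrt ((T'+1 : ℕ):ℝ) :=
          Real.sqrt_le_sqrt (by push_cast; linarith)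
        have hsplit' : Real.sqrt ((K:ℝ)^n) * Real.sqrt ((T'+1:ℕ):ℝ)
            = Real.sqrt ((K:ℝ)^n * ((T'+1:ℕ):ℝ)) := (Real.sqrt_mul (by positivity) _).symm
        have hone : (1:ℝ) ≤ Real.sqrt ((K:ℝ)^n * ((T'+1:ℕ):ℝ)) := by
          rw [show (1:ℝ) = Real.sqrt 1 from (Real.sqrt_one).symm]
          refine Real.sqrt_le_sqrt ?_
          have : (1:ℝ) ≤ ((T'+1:ℕ):ℝ) := by exact_mod_cast Nat.one_le_iff_ne_zero.2 (Nat.succ_ne_zero T')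
          nlinarith
        nlinarith [mul_le_mul_of_nonneg_left hT'le hsKn, hsplit', hone, hsKn]
end
end

section
/- There is a universal constant C > 0 with the following property. In any multi-follower Bayesian Stackelberg game whose joint type distribution is a product D = D_1 × ··· × D_n of marginals on [K], consider the learning algorithm that picks an arbitrary x^1 ∈ Δ([L]) and, for every round t ≥ 2, picks x^t ∈ argmax_{x ∈ Δ([L])} E_{θ ∼ D̂^{t−1}}[u(x, br(θ, x))], where D̂^{t−1} = Π_{i=1}^n D̂_i^{t−1} and D̂_i^{t−1}(k) = (1/(t−1))·Σ_{s=1}^{t−1} 1[θ_i^s = k] is the empirical marginal of follower i from the observed i.i.d. samples θ^1, ..., θ^{t−1} ∼ D. Then its expected regret satisfies E[Σ_{t=1}^T (sup_{x ∈ Δ([L])} U_D(x) − U_D(x^t))] ≤ C·sqrt(nKT). -/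
open Finset

noncomputable section

/-- The empirical product distribution built from the history `h` of `t` observed type
profiles: the product over followers `i` of the empirical marginals
`D̂_i(k) = (1/t)·∑_s 1[h s i = k]`. -/
def empProd {n K : ℕ} (t : ℕ) (h : Fin t → (Fin n → Fin K)) (θ : Fin n → Fin K) : ℝ :=
  ∏ i, ((1 / (t : ℝ)) * ∑ s, if h s i = θ i then (1 : ℝ) else 0)

lemma expect_pi {ι X : Type*} [Fintype ι] [Fintype X] [DecidableEq ι] (F : ι → X → ℝ) :
    ∑ ω : ι → X, ∏ i, F i (ω i) = ∏ i, ∑ x, F i x :=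
  (Fintype.prod_sum F).symm

lemma expect_single {ι X : Type*} [Fintype ι] [Fintype X] [DecidableEq ι]
    (W : ι → X → ℝ) (hW : ∀ j, ∑ x, W j x = 1) (i : ι) (g : X → ℝ) :
    ∑ ω : ι → X, (∏ j, W j (ω j)) * g (ω i) = ∑ x, W i x * g x := by
  have h1 : ∀ ω : ι → X, (∏ j, W j (ω j)) * g (ω i)
      = ∏ j, (W j (ω j) * (if j = i then g (ω j) else 1)) := by
    intro ω
    rw [Finset.prod_mul_distrib, Finset.prod_ite_eq' Finset.univ i (fun j => g (ω j))]
    simp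
  rw [Finset.sum_congr rfl (fun ω _ => h1 ω),
    expect_pi (fun j x => W j x * (if j = i then g x else 1))]
  have h2 : ∀ j, (∑ x, (W j x * (if j = i then g x else 1)))
      = (if j = i then ∑ x, W i x * g x else 1) := by
    intro j
    by_cases hj : j = i <;> simp [hj, hW j]
  rw [Finset.prod_congr rfl (fun j _ => h2 j),
    Finset.prod_ite_eq' Finset.univ i (fun _ => ∑ x, W i x * g x)]
  simp

lemma expect_pair {ι X : Type*} [Fintype ι] [Fintype X] [DecidableEq ι]
    (W : ι → X → ℝ) (hW : ∀ j, ∑ x, W j x = 1) {i i' : ι} (hii : i ≠ i') (g h : X → ℝ) :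
    ∑ ω : ι → X, (∏ j, W j (ω j)) * (g (ω i) * h (ω i'))
      = (∑ x, W i x * g x) * (∑ x, W i' x * h x) := by
  have split : ∀ (b c : ι → ℝ) (j : ι), (if j = i then b j else if j = i' then c j else 1)
      = (if j = i then b j else 1) * (if j = i' then c j else 1) := by
    intro b c j
    by_cases h1 : j = i
    · subst h1; simp [hii]
    · by_cases h2 : j = i' <;> simp [h1, h2, Ne.symm hii]
  have h1 : ∀ ω : ι → X, (∏ j, W j (ω j)) * (g (ω i) * h (ω i'))
      = ∏ j, (W j (ω j) * (if j = i then g (ω j) else if j = i' then h (ω j) else 1)) := by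
    intro ω
    rw [Finset.prod_mul_distrib,
      Finset.prod_congr rfl (fun j _ => split (fun j => g (ω j)) (fun j => h (ω j)) j),
      Finset.prod_mul_distrib, Finset.prod_ite_eq' Finset.univ i (fun j => g (ω j)),
      Finset.prod_ite_eq' Finset.univ i' (fun j => h (ω j))]
    simp
  rw [Finset.sum_congr rfl (fun ω _ => h1 ω),
    expect_pi (fun j x => W j x * (if j = i then g x else if j = i' then h x else 1))]
  have h2 : ∀ j, (∑ x, (W j x * (if j = i then g x else if j = i' then h x else 1)))
      = (if j = i then ∑ x, W i x * g x else if j = i' then ∑ x, W i' x * h x else 1) := by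
    intro j
    by_cases hj : j = i
    · simp [hj]
    · by_cases hj' : j = i' <;> simp [hj, hj', Ne.symm hii, hW j]
  rw [Finset.prod_congr rfl (fun j _ => h2 j),
    Finset.prod_congr rfl (fun j _ => split (fun _ => ∑ x, W i x * g x) (fun _ => ∑ x, W i' x * h x) j),
    Finset.prod_mul_distrib, Finset.prod_ite_eq' Finset.univ i (fun _ => ∑ x, W i x * g x),
    Finset.prod_ite_eq' Finset.univ i' (fun _ => ∑ x, W i' x * h x)]
  simp

/-- Jensen / Cauchy-Schwarz: E[√f] ≤ √(E f). -/
lemma sum_sqrt_le {α : Type*} (s : Finset α) (w f : α → ℝ) (hw : ∀ a ∈ s, 0 ≤ w a)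
    (hf : ∀ a ∈ s, 0 ≤ f a) (hw1 : ∑ a ∈ s, w a = 1) :
    ∑ a ∈ s, w a * Real.sqrt (f a) ≤ Real.sqrt (∑ a ∈ s, w a * f a) := by
  have key : (∑ a ∈ s, w a * Real.sqrt (f a)) ^ 2 ≤ ∑ a ∈ s, w a * f a := by
    have h := Finset.sum_mul_sq_le_sq_mul_sq s (fun a => Real.sqrt (w a))
      (fun a => Real.sqrt (w a) * Real.sqrt (f a))
    have e1 : ∀ a ∈ s, Real.sqrt (w a) * (Real.sqrt (w a) * Real.sqrt (f a))
        = w a * Real.sqrt (f a) := by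
      intro a ha; rw [← mul_assoc, Real.mul_self_sqrt (hw a ha)]
    have e2 : ∀ a ∈ s, Real.sqrt (w a) ^ 2 = w a := fun a ha => Real.sq_sqrt (hw a ha)
    have e3 : ∀ a ∈ s, (Real.sqrt (w a) * Real.sqrt (f a)) ^ 2 = w a * f a := by
      intro a ha; rw [mul_pow, Real.sq_sqrt (hw a ha), Real.sq_sqrt (hf a ha)]
    rw [Finset.sum_congr rfl e1, Finset.sum_congr rfl e2, Finset.sum_congr rfl e3, hw1,
      one_mul] at h
    exact h
  have h0 : 0 ≤ ∑ a ∈ s, w a * Real.sqrt (f a) :=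
    Finset.sum_nonneg fun a ha => mul_nonneg (hw a ha) (Real.sqrt_nonneg _)
  calc ∑ a ∈ s, w a * Real.sqrt (f a)
      = Real.sqrt ((∑ a ∈ s, w a * Real.sqrt (f a)) ^ 2) := (Real.sqrt_sq h0).symm
    _ ≤ Real.sqrt (∑ a ∈ s, w a * f a) := Real.sqrt_le_sqrt key

/-- √ of a product of nonnegatives is the product of √. -/
lemma sqrt_prod {α : Type*} (s : Finset α) (f : α → ℝ) (hf : ∀ a ∈ s, 0 ≤ f a) :
    Real.sqrt (∏ a ∈ s, f a) = ∏ a ∈ s, Real.sqrt (f a) := by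
  induction s using Finset.cons_induction with
  | empty => simp
  | cons a s ha ih =>
    rw [Finset.prod_cons, Finset.prod_cons, Real.sqrt_mul (hf a (Finset.mem_cons_self a s)),
      ih (fun b hb => hf b (Finset.mem_cons_of_mem hb))]

/-- `1 - ∏ ρ ≤ ∑ (1 - ρ)` for `ρ ∈ [0,1]`. -/
lemma one_sub_prod_le {α : Type*} (s : Finset α) (f : α → ℝ)
    (h0 : ∀ a ∈ s, 0 ≤ f a) (h1 : ∀ a ∈ s, f a ≤ 1) :
    1 - ∏ a ∈ s, f a ≤ ∑ a ∈ s, (1 - f a) := by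
  induction s using Finset.cons_induction with
  | empty => simp
  | cons a s ha ih =>
    rw [Finset.prod_cons, Finset.sum_cons]
    have hp0 : 0 ≤ ∏ b ∈ s, f b :=
      Finset.prod_nonneg fun b hb => h0 b (Finset.mem_cons_of_mem hb)
    have hp1 : ∏ b ∈ s, f b ≤ 1 :=
      Finset.prod_le_one (fun b hb => h0 b (Finset.mem_cons_of_mem hb))
        (fun b hb => h1 b (Finset.mem_cons_of_mem hb))
    have ha0 := h0 a (Finset.mem_cons_self a s)
    have ha1 := h1 a (Finset.mem_cons_self a s)
    have ihs := ih (fun b hb => h0 b (Finset.mem_cons_of_mem hb))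
      (fun b hb => h1 b (Finset.mem_cons_of_mem hb))
    nlinarith

/-- Bhattacharyya coefficient is at most 1. -/
lemma bc_le_one {α : Type*} [Fintype α] (P Q : α → ℝ) (hP : ∀ a, 0 ≤ P a) (hQ : ∀ a, 0 ≤ Q a)
    (hP1 : ∑ a, P a = 1) (hQ1 : ∑ a, Q a = 1) :
    ∑ a, Real.sqrt (P a * Q a) ≤ 1 := by
  have h := Finset.sum_mul_sq_le_sq_mul_sq Finset.univ (fun a => Real.sqrt (P a))
    (fun a => Real.sqrt (Q a))
  have e1 : ∀ a ∈ Finset.univ (α := α), Real.sqrt (P a) * Real.sqrt (Q a)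
      = Real.sqrt (P a * Q a) := by
    intro a _; rw [Real.sqrt_mul (hP a)]
  have e2 : ∀ a ∈ Finset.univ (α := α), Real.sqrt (P a) ^ 2 = P a :=
    fun a _ => Real.sq_sqrt (hP a)
  have e3 : ∀ a ∈ Finset.univ (α := α), Real.sqrt (Q a) ^ 2 = Q a :=
    fun a _ => Real.sq_sqrt (hQ a)
  rw [Finset.sum_congr rfl e1, Finset.sum_congr rfl e2, Finset.sum_congr rfl e3, hP1, hQ1,
    one_mul] at h
  have h0 : 0 ≤ ∑ a, Real.sqrt (P a * Q a) :=
    Finset.sum_nonneg fun a _ => Real.sqrt_nonneg _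
  nlinarith

/-- TV–Hellinger: `∑ |P - Q| ≤ 2√2 · √(1 - ρ)`. -/
lemma tv_le_hellinger {α : Type*} [Fintype α] (P Q : α → ℝ) (hP : ∀ a, 0 ≤ P a)
    (hQ : ∀ a, 0 ≤ Q a) (hP1 : ∑ a, P a = 1) (hQ1 : ∑ a, Q a = 1) :
    ∑ a, |P a - Q a| ≤ 2 * Real.sqrt 2 * Real.sqrt (1 - ∑ a, Real.sqrt (P a * Q a)) := by
  set ρ := ∑ a, Real.sqrt (P a * Q a) with hρ
  have hρ1 : ρ ≤ 1 := bc_le_one P Q hP hQ hP1 hQ1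
  have hρ0 : 0 ≤ ρ := Finset.sum_nonneg fun a _ => Real.sqrt_nonneg _
  have habs : ∀ a, |P a - Q a| = |Real.sqrt (P a) - Real.sqrt (Q a)|
      * (Real.sqrt (P a) + Real.sqrt (Q a)) := by
    intro a
    have e : P a - Q a = (Real.sqrt (P a) - Real.sqrt (Q a))
        * (Real.sqrt (P a) + Real.sqrt (Q a)) := by
      nlinarith [Real.sq_sqrt (hP a), Real.sq_sqrt (hQ a)]
    rw [e, abs_mul, abs_of_nonneg (by positivity : (0:ℝ) ≤ Real.sqrt (P a) + Real.sqrt (Q a))]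
  have hCS := Finset.sum_mul_sq_le_sq_mul_sq Finset.univ
    (fun a => |Real.sqrt (P a) - Real.sqrt (Q a)|) (fun a => Real.sqrt (P a) + Real.sqrt (Q a))
  have e2 : ∑ a, |Real.sqrt (P a) - Real.sqrt (Q a)| ^ 2 = 2 - 2 * ρ := by
    have : ∀ a ∈ Finset.univ (α := α), |Real.sqrt (P a) - Real.sqrt (Q a)| ^ 2
        = P a + Q a - 2 * Real.sqrt (P a * Q a) := by
      intro a _
      rw [sq_abs, sub_sq, Real.sq_sqrt (hP a), Real.sq_sqrt (hQ a), Real.sqrt_mul (hP a)]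
      ring
    rw [Finset.sum_congr rfl this, Finset.sum_sub_distrib, Finset.sum_add_distrib, hP1, hQ1,
      ← Finset.mul_sum, ← hρ]
    ring
  have e3 : ∑ a, (Real.sqrt (P a) + Real.sqrt (Q a)) ^ 2 = 2 + 2 * ρ := by
    have : ∀ a ∈ Finset.univ (α := α), (Real.sqrt (P a) + Real.sqrt (Q a)) ^ 2
        = P a + Q a + 2 * Real.sqrt (P a * Q a) := by
      intro a _
      rw [add_sq, Real.sq_sqrt (hP a), Real.sq_sqrt (hQ a), Real.sqrt_mul (hP a)]
      ring
    rw [Finset.sum_congr rfl this, Finset.sum_add_distrib, Finset.sum_add_distrib, hP1, hQ1,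
      ← Finset.mul_sum, ← hρ]
    ring
  rw [Finset.sum_congr rfl (fun a _ => habs a)]
  have hsum0 : 0 ≤ ∑ a, |Real.sqrt (P a) - Real.sqrt (Q a)| * (Real.sqrt (P a) + Real.sqrt (Q a)) :=
    Finset.sum_nonneg fun a _ => mul_nonneg (abs_nonneg _) (by positivity)
  have hb : (∑ a, |Real.sqrt (P a) - Real.sqrt (Q a)| * (Real.sqrt (P a) + Real.sqrt (Q a))) ^ 2
      ≤ (2 - 2*ρ) * 4 := by
    rw [e2, e3] at hCS
    nlinarith
  have : ∑ a, |Real.sqrt (P a) - Real.sqrt (Q a)| * (Real.sqrt (P a) + Real.sqrt (Q a))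
      ≤ Real.sqrt ((2 - 2*ρ) * 4) := by
    rw [← Real.sqrt_sq hsum0]
    exact Real.sqrt_le_sqrt hb
  refine this.trans (le_of_eq ?_)
  have h8 : Real.sqrt 8 = 2 * Real.sqrt 2 := by
    rw [show (8:ℝ) = 2^2 * 2 by norm_num, Real.sqrt_mul (by positivity), Real.sqrt_sq (by norm_num)]
  rw [show (2 - 2*ρ)*4 = 8*(1-ρ) by ring, Real.sqrt_mul (by norm_num), h8]

/-- Hellinger vs chi-square: `1 - ρ ≤ (1/2) ∑ (Q-P)²/P` when `supp Q ⊆ supp P`. -/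
lemma hellinger_le_chisq {α : Type*} [Fintype α] (P Q : α → ℝ) (hP : ∀ a, 0 ≤ P a)
    (hQ : ∀ a, 0 ≤ Q a) (hP1 : ∑ a, P a = 1) (hQ1 : ∑ a, Q a = 1)
    (hsupp : ∀ a, 0 < Q a → 0 < P a) :
    1 - ∑ a, Real.sqrt (P a * Q a)
      ≤ (1/2) * ∑ a, (if 0 < P a then (Q a - P a)^2 / P a else 0) := by
  have key : ∀ a, P a + Q a - 2 * Real.sqrt (P a * Q a)
      ≤ (if 0 < P a then (Q a - P a)^2 / P a else 0) := by
    intro a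
    by_cases hPa : 0 < P a
    · simp only [hPa, if_true]
      have h1 : (Real.sqrt (P a) - Real.sqrt (Q a))^2 * P a ≤ (Q a - P a)^2 := by
        have e : (Q a - P a)^2 = (Real.sqrt (P a) - Real.sqrt (Q a))^2
            * (Real.sqrt (P a) + Real.sqrt (Q a))^2 := by
          nlinarith [Real.sq_sqrt (hP a), Real.sq_sqrt (hQ a)]
        rw [e]
        have hle : P a ≤ (Real.sqrt (P a) + Real.sqrt (Q a))^2 := by
          nlinarith [Real.sq_sqrt (hP a), Real.sq_sqrt (hQ a), Real.sqrt_nonneg (P a),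
            Real.sqrt_nonneg (Q a)]
        exact mul_le_mul_of_nonneg_left hle (sq_nonneg _)
      have e2 : P a + Q a - 2 * Real.sqrt (P a * Q a)
          = (Real.sqrt (P a) - Real.sqrt (Q a))^2 := by
        rw [sub_sq, Real.sq_sqrt (hP a), Real.sq_sqrt (hQ a), Real.sqrt_mul (hP a)]
        ring
      rw [e2, le_div_iff₀ hPa]
      exact h1
    · have hP0 : P a = 0 := le_antisymm (not_lt.mp hPa) (hP a)
      have hQ0 : Q a = 0 := by
        by_contra h
        exact hPa (hsupp a (lt_of_le_of_ne (hQ a) (Ne.symm h)))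
      simp [hP0, hQ0, hPa]
  have := Finset.sum_le_sum (fun a (_ : a ∈ Finset.univ) => key a)
  rw [Finset.sum_sub_distrib, Finset.sum_add_distrib, hP1, hQ1, ← Finset.mul_sum] at this
  linarith
/-- `∑_{m<M} 1/√(m+1) ≤ 2√M`. -/
lemma sum_inv_sqrt_le (M : ℕ) :
    ∑ m ∈ Finset.range M, (1 / Real.sqrt (m+1)) ≤ 2 * Real.sqrt M := by
  induction M with
  | zero => simp
  | succ M ih =>
    rw [Finset.sum_range_succ]
    have ha : Real.sqrt M ≥ 0 := Real.sqrt_nonneg _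
    have hb : Real.sqrt (M+1) > 0 := Real.sqrt_pos.mpr (by positivity)
    have ha2 : Real.sqrt M ^ 2 = M := Real.sq_sqrt (by positivity)
    have hb2 : Real.sqrt (M+1) ^ 2 = M+1 := Real.sq_sqrt (by positivity)
    have step : 1 / Real.sqrt ((M:ℝ)+1) ≤ 2 * Real.sqrt (M+1) - 2 * Real.sqrt M := by
      rw [div_le_iff₀ hb]
      nlinarith [sq_nonneg (Real.sqrt M - Real.sqrt (M+1))]
    push_cast
    linarith

lemma var_bound {ι X : Type*} [Fintype ι] [Fintype X] [DecidableEq ι]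
    (W : X → ℝ) (hW0 : ∀ x, 0 ≤ W x) (hW1 : ∑ x, W x = 1)
    {t : ℕ} (ht : 1 ≤ t) (e : Fin t → ι) (he : Function.Injective e)
    (g : X → ℝ) (hg : ∀ x, g x = 0 ∨ g x = 1) :
    ∑ ω : ι → X, (∏ j, W (ω j)) * ((1/(t:ℝ)) * (∑ s, g (ω (e s))) - ∑ x, W x * g x)^2
      ≤ (∑ x, W x * g x) / t := by
  set p := ∑ x, W x * g x with hp
  have htR : (0:ℝ) < t := by exact_mod_cast ht
  have hp0 : 0 ≤ p := Finset.sum_nonneg fun x _ => by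
    rcases hg x with h | h <;> simp [h, hW0 x]
  have hp1 : p ≤ 1 := by
    rw [← hW1]
    refine Finset.sum_le_sum fun x _ => ?_
    rcases hg x with h | h <;> simp [h, hW0 x]
  have Etot : ∑ ω : ι → X, (∏ j, W (ω j)) = 1 := by
    rw [expect_pi (fun _ x => W x), Finset.prod_congr rfl (fun _ _ => hW1), Finset.prod_const_one]
  have E1 : ∀ i : ι, ∑ ω : ι → X, (∏ j, W (ω j)) * g (ω i) = p :=
    fun i => expect_single (fun _ => W) (fun _ => hW1) i g
  have E2 : ∀ i i' : ι, i ≠ i' →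
      ∑ ω : ι → X, (∏ j, W (ω j)) * (g (ω i) * g (ω i')) = p * p :=
    fun i i' hii => expect_pair (fun _ => W) (fun _ => hW1) hii g g
  have E2diag : ∀ i : ι, ∑ ω : ι → X, (∏ j, W (ω j)) * (g (ω i) * g (ω i)) = p := by
    intro i
    have := expect_single (fun _ => W) (fun _ => hW1) i (fun x => g x * g x)
    rw [this]
    refine Finset.sum_congr rfl fun x _ => ?_
    rcases hg x with h | h <;> simp [h]
  -- E[c]
  have hEc : ∑ ω : ι → X, (∏ j, W (ω j)) * (∑ s, g (ω (e s))) = t * p := by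
    calc ∑ ω : ι → X, (∏ j, W (ω j)) * (∑ s, g (ω (e s)))
        = ∑ ω : ι → X, ∑ s, (∏ j, W (ω j)) * g (ω (e s)) := by
          exact Finset.sum_congr rfl fun ω _ => Finset.mul_sum _ _ _
      _ = ∑ s, ∑ ω : ι → X, (∏ j, W (ω j)) * g (ω (e s)) := Finset.sum_comm
      _ = ∑ s : Fin t, p := Finset.sum_congr rfl fun s _ => E1 (e s)
      _ = t * p := by simp [Finset.sum_const, nsmul_eq_mul]
  -- E[c^2]
  have hEc2 : ∑ ω : ι → X, (∏ j, W (ω j)) * (∑ s, g (ω (e s)))^2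
      = t * p + (t^2 - t) * (p*p) := by
    calc ∑ ω : ι → X, (∏ j, W (ω j)) * (∑ s, g (ω (e s)))^2
        = ∑ ω : ι → X, ∑ s, ∑ s', (∏ j, W (ω j)) * (g (ω (e s)) * g (ω (e s'))) := by
          refine Finset.sum_congr rfl fun ω _ => ?_
          rw [sq, Finset.sum_mul_sum, Finset.mul_sum]
          exact Finset.sum_congr rfl fun s _ => Finset.mul_sum _ _ _
      _ = ∑ s : Fin t, ∑ s' : Fin t,
            ∑ ω : ι → X, (∏ j, W (ω j)) * (g (ω (e s)) * g (ω (e s'))) := by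
          rw [Finset.sum_comm]
          exact Finset.sum_congr rfl fun s _ => Finset.sum_comm
      _ = ∑ s : Fin t, ∑ s' : Fin t, (if s = s' then p else p * p) := by
          refine Finset.sum_congr rfl fun s _ => Finset.sum_congr rfl fun s' _ => ?_
          by_cases hss : s = s'
          · subst hss; rw [E2diag (e s), if_pos rfl]
          · rw [E2 (e s) (e s') (fun h => hss (he h)), if_neg hss]
      _ = ∑ s : Fin t, (p + ((t:ℝ) - 1) * (p * p)) := by
          refine Finset.sum_congr rfl fun s _ => ?_
          have : ∀ s' : Fin t, (if s = s' then p else p * p)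
              = p * p + (if s = s' then p - p * p else 0) := by
            intro s'; by_cases hss : s = s' <;> simp [hss]
          rw [Finset.sum_congr rfl fun s' _ => this s', Finset.sum_add_distrib,
            Finset.sum_const, Finset.sum_ite_eq Finset.univ s (fun _ => p - p * p)]
          simp [nsmul_eq_mul]
          ring
      _ = t * p + (t^2 - t) * (p*p) := by
          rw [Finset.sum_const]
          simp [nsmul_eq_mul]
          ring
  have expand : ∀ ω : ι → X, (∏ j, W (ω j)) * ((1/(t:ℝ)) * (∑ s, g (ω (e s))) - p)^2
      = (1/(t:ℝ))^2 * ((∏ j, W (ω j)) * (∑ s, g (ω (e s)))^2)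
        - (2*p/(t:ℝ)) * ((∏ j, W (ω j)) * (∑ s, g (ω (e s))))
        + (p^2) * (∏ j, W (ω j)) := by
    intro ω; ring
  rw [Finset.sum_congr rfl fun ω _ => expand ω, Finset.sum_add_distrib,
    Finset.sum_sub_distrib, ← Finset.mul_sum, ← Finset.mul_sum, ← Finset.mul_sum,
    hEc2, hEc, Etot]
  have : (1/(t:ℝ))^2 * (t * p + (t^2 - t) * (p*p)) - (2*p/(t:ℝ)) * (t * p) + p^2 * 1
      = (p - p*p)/t := by
    field_simp
    ring
  rw [this]
  have hfin : (p - p*p)/(t:ℝ) ≤ p/(t:ℝ) := by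
    gcongr
    nlinarith
  exact hfin

section Game
variable {n L A K : ℕ} {u : Fin L → (Fin n → Fin A) → ℝ}
  {br : (Fin n → Fin K) → (Fin L → ℝ) → (Fin n → Fin A)}

lemma leaderU_mem (hu : ∀ ℓ a, u ℓ a ∈ Set.Icc (0:ℝ) 1) {x : Fin L → ℝ}
    (hx : x ∈ stdSimplex ℝ (Fin L)) (a : Fin n → Fin A) :
    leaderU u x a ∈ Set.Icc (0:ℝ) 1 := by
  constructor
  · exact Finset.sum_nonneg fun ℓ _ => mul_nonneg (hx.1 ℓ) (hu ℓ a).1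
  · calc leaderU u x a ≤ ∑ ℓ, x ℓ :=
        Finset.sum_le_sum fun ℓ _ => by
          nlinarith [(hu ℓ a).1, (hu ℓ a).2, hx.1 ℓ]
    _ = 1 := hx.2

lemma UD_nonneg (hu : ∀ ℓ a, u ℓ a ∈ Set.Icc (0:ℝ) 1) {D : (Fin n → Fin K) → ℝ}
    (hD : ∀ θ, 0 ≤ D θ) {x : Fin L → ℝ} (hx : x ∈ stdSimplex ℝ (Fin L)) :
    0 ≤ UD D u br x :=
  Finset.sum_nonneg fun θ _ => mul_nonneg (hD θ) (leaderU_mem hu hx _).1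

lemma UD_le_one (hu : ∀ ℓ a, u ℓ a ∈ Set.Icc (0:ℝ) 1) {D : (Fin n → Fin K) → ℝ}
    (hD : IsDist D) {x : Fin L → ℝ} (hx : x ∈ stdSimplex ℝ (Fin L)) :
    UD D u br x ≤ 1 := by
  calc UD D u br x ≤ ∑ θ, D θ :=
      Finset.sum_le_sum fun θ _ => by
        nlinarith [(leaderU_mem hu hx (br θ x)).1, (leaderU_mem hu hx (br θ x)).2, hD.1 θ]
  _ = 1 := hD.2

lemma UD_diff_le (hu : ∀ ℓ a, u ℓ a ∈ Set.Icc (0:ℝ) 1) (D1 D2 : (Fin n → Fin K) → ℝ)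
    {x : Fin L → ℝ} (hx : x ∈ stdSimplex ℝ (Fin L)) :
    UD D1 u br x ≤ UD D2 u br x + ∑ θ, |D1 θ - D2 θ| := by
  have : UD D1 u br x - UD D2 u br x ≤ ∑ θ, |D1 θ - D2 θ| := by
    rw [UD, UD, ← Finset.sum_sub_distrib]
    refine Finset.sum_le_sum fun θ _ => ?_
    have hc := leaderU_mem hu hx (br θ x)
    have : D1 θ * leaderU u x (br θ x) - D2 θ * leaderU u x (br θ x)
        = (D1 θ - D2 θ) * leaderU u x (br θ x) := by ring
    rw [this]
    calc (D1 θ - D2 θ) * leaderU u x (br θ x) ≤ |D1 θ - D2 θ| * leaderU u x (br θ x) :=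
        mul_le_mul_of_nonneg_right (le_abs_self _) hc.1
      _ ≤ |D1 θ - D2 θ| * 1 := mul_le_mul_of_nonneg_left hc.2 (abs_nonneg _)
      _ = |D1 θ - D2 θ| := mul_one _
  linarith

lemma optUD_le {D : (Fin n → Fin K) → ℝ} {c : ℝ} (hc : 0 ≤ c)
    (h : ∀ y ∈ stdSimplex ℝ (Fin L), UD D u br y ≤ c) :
    optUD D u br ≤ c := by
  refine Real.sSup_le ?_ hc
  rintro z ⟨y, hy, rfl⟩
  exact h y hy

/-- Per-round regret bound via total variation to the empirical distribution. -/
lemma round_regret (hu : ∀ ℓ a, u ℓ a ∈ Set.Icc (0:ℝ) 1)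
    {D : (Fin n → Fin K) → ℝ} (hD : IsDist D)
    {t : ℕ} (h : Fin t → (Fin n → Fin K)) {x : Fin L → ℝ} (hx : x ∈ stdSimplex ℝ (Fin L))
    (hopt : ∀ y ∈ stdSimplex ℝ (Fin L),
      ∑ θ : Fin n → Fin K, empProd t h θ * leaderU u y (br θ y) ≤
        ∑ θ : Fin n → Fin K, empProd t h θ * leaderU u x (br θ x)) :
    optUD D u br - UD D u br x ≤ 2 * ∑ θ, |D θ - empProd t h θ| := by
  set Δ := ∑ θ, |D θ - empProd t h θ| with hΔ
  have hΔ0 : 0 ≤ Δ := Finset.sum_nonneg fun θ _ => abs_nonneg _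
  have key : ∀ y ∈ stdSimplex ℝ (Fin L), UD D u br y ≤ UD D u br x + 2 * Δ := by
    intro y hy
    have h1 : UD D u br y ≤ UD (empProd t h) u br y + Δ := UD_diff_le hu D (empProd t h) hy
    have h2 : UD (empProd t h) u br y ≤ UD (empProd t h) u br x := hopt y hy
    have h3 : UD (empProd t h) u br x ≤ UD D u br x + Δ := by
      have := UD_diff_le (br := br) hu (empProd t h) D hx
      refine this.trans (le_of_eq ?_)
      congr 1
      exact Finset.sum_congr rfl fun θ _ => abs_sub_comm _ _
    linarith
  have hx0 : 0 ≤ UD D u br x := UD_nonneg hu hD.1 hx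
  have : optUD D u br ≤ UD D u br x + 2 * Δ :=
    optUD_le (by linarith) key
  linarith

lemma round_regret_triv (hu : ∀ ℓ a, u ℓ a ∈ Set.Icc (0:ℝ) 1)
    {D : (Fin n → Fin K) → ℝ} (hD : IsDist D)
    {x : Fin L → ℝ} (hx : x ∈ stdSimplex ℝ (Fin L)) :
    optUD D u br - UD D u br x ≤ 1 := by
  have h1 : optUD D u br ≤ 1 :=
    optUD_le zero_le_one fun y hy => UD_le_one hu hD hy
  have h2 : 0 ≤ UD D u br x := UD_nonneg hu hD.1 hx
  linarith

end Game

/-- Expected total variation between the true product distribution and the empirical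
product distribution built from `t` i.i.d. samples. -/
lemma exp_tv_le {n K T t : ℕ} (ht : 1 ≤ t) (htT : t ≤ T)
    (Dm : Fin n → Fin K → ℝ) (hDm : ∀ i, IsDist (Dm i)) :
    ∑ ω : Fin T → (Fin n → Fin K), (∏ s, ∏ i, Dm i (ω s i)) *
        ∑ θ, |(∏ i, Dm i (θ i)) - empProd t (fun s : Fin t => ω (Fin.castLE htT s)) θ|
      ≤ 2 * Real.sqrt ((n*K : ℝ)/t) := by
  have htR : (0:ℝ) < t := by exact_mod_cast ht
  set X := (Fin n → Fin K)
  set W : X → ℝ := fun y => ∏ i, Dm i (y i) with hWdef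
  have hW0 : ∀ y, 0 ≤ W y := fun y => Finset.prod_nonneg fun i _ => (hDm i).1 (y i)
  have hW1 : ∑ y, W y = 1 := by
    rw [expect_pi (fun i k => Dm i k)]
    exact Finset.prod_eq_one fun i _ => (hDm i).2
  have hw1 : ∑ ω : Fin T → X, (∏ s, W (ω s)) = 1 := by
    rw [expect_pi (fun (_ : Fin T) y => W y)]
    exact Finset.prod_eq_one fun s _ => hW1
  -- the empirical marginals
  set q : Fin n → Fin K → (Fin T → X) → ℝ :=
    fun i k ω => (1/(t:ℝ)) * ∑ s : Fin t, if ω (Fin.castLE htT s) i = k then (1:ℝ) else 0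
    with hqdef
  have hq0 : ∀ i k ω, 0 ≤ q i k ω := by
    intro i k ω
    apply mul_nonneg (by positivity)
    exact Finset.sum_nonneg fun s _ => by positivity
  have hq1 : ∀ i ω, ∑ k, q i k ω = 1 := by
    intro i ω
    rw [← Finset.mul_sum, Finset.sum_comm]
    have : ∀ s : Fin t, ∑ k, (if ω (Fin.castLE htT s) i = k then (1:ℝ) else 0) = 1 := by
      intro s
      rw [Finset.sum_ite_eq Finset.univ (ω (Fin.castLE htT s) i) (fun _ => (1:ℝ))]
      simp
    rw [Finset.sum_congr rfl fun s _ => this s, Finset.sum_const]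
    simp
    try field_simp
  have hempq : ∀ ω θ, empProd t (fun s : Fin t => ω (Fin.castLE htT s)) θ = ∏ i, q i (θ i) ω :=
    fun ω θ => rfl
  -- the chi-square-type quantity
  set G : (Fin T → X) → ℝ := fun ω => ∑ i, ∑ k,
    (if 0 < Dm i k then (q i k ω - Dm i k)^2 / Dm i k else 0) with hGdef
  have hG0 : ∀ ω, 0 ≤ G ω := by
    intro ω
    refine Finset.sum_nonneg fun i _ => Finset.sum_nonneg fun k _ => ?_
    by_cases h : 0 < Dm i k <;> simp [h] <;> positivity
  -- pointwise TV bound for ω in the support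
  have pointwise : ∀ ω : Fin T → X, (∏ s, W (ω s)) ≠ 0 →
      ∑ θ, |(∏ i, Dm i (θ i)) - empProd t (fun s : Fin t => ω (Fin.castLE htT s)) θ|
        ≤ 2 * Real.sqrt (G ω) := by
    intro ω hω
    have hsupp : ∀ i k, 0 < q i k ω → 0 < Dm i k := by
      intro i k hq
      have h2 : ∃ s : Fin t, ω (Fin.castLE htT s) i = k := by
        by_contra hcon
        push_neg at hcon
        have : ∑ s : Fin t, (if ω (Fin.castLE htT s) i = k then (1:ℝ) else 0) = 0 :=
          Finset.sum_eq_zero fun s _ => by simp [hcon s]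
        rw [hqdef] at hq
        simp only at hq
        rw [this, mul_zero] at hq
        exact lt_irrefl 0 hq
      obtain ⟨s, hs⟩ := h2
      have hfac : W (ω (Fin.castLE htT s)) ≠ 0 := by
        intro h0
        exact hω (Finset.prod_eq_zero (Finset.mem_univ _) h0)
      have : Dm i (ω (Fin.castLE htT s) i) ≠ 0 := by
        intro h0
        exact hfac (Finset.prod_eq_zero (Finset.mem_univ i) h0)
      rw [hs] at this
      exact lt_of_le_of_ne ((hDm i).1 k) (Ne.symm this)
    -- distributions on X
    have hD0 : ∀ θ : X, 0 ≤ ∏ i, Dm i (θ i) := fun θ => hW0 θ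
    have hQ0 : ∀ θ : X, 0 ≤ ∏ i, q i (θ i) ω :=
      fun θ => Finset.prod_nonneg fun i _ => hq0 i (θ i) ω
    have hQ1 : ∑ θ : X, ∏ i, q i (θ i) ω = 1 := by
      rw [expect_pi (fun i k => q i k ω)]
      exact Finset.prod_eq_one fun i _ => hq1 i ω
    set ρ : Fin n → ℝ := fun i => ∑ k, Real.sqrt (Dm i k * q i k ω) with hρdef
    have hρfac : ∑ θ : X, Real.sqrt ((∏ i, Dm i (θ i)) * ∏ i, q i (θ i) ω) = ∏ i, ρ i := by
      have : ∀ θ : X, Real.sqrt ((∏ i, Dm i (θ i)) * ∏ i, q i (θ i) ω)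
          = ∏ i, Real.sqrt (Dm i (θ i) * q i (θ i) ω) := by
        intro θ
        rw [← Finset.prod_mul_distrib,
          sqrt_prod Finset.univ _ (fun i _ => mul_nonneg ((hDm i).1 _) (hq0 i (θ i) ω))]
      rw [Finset.sum_congr rfl fun θ _ => this θ,
        expect_pi (fun i k => Real.sqrt (Dm i k * q i k ω))]
    have hρ0 : ∀ i, 0 ≤ ρ i := fun i => Finset.sum_nonneg fun k _ => Real.sqrt_nonneg _
    have hρ1 : ∀ i, ρ i ≤ 1 := fun i =>
      bc_le_one (Dm i) (fun k => q i k ω) ((hDm i).1) (fun k => hq0 i k ω) ((hDm i).2) (hq1 i ω)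
    have hhel : ∀ i, 1 - ρ i ≤ (1/2) * ∑ k,
        (if 0 < Dm i k then (q i k ω - Dm i k)^2 / Dm i k else 0) := fun i =>
      hellinger_le_chisq (Dm i) (fun k => q i k ω) ((hDm i).1) (fun k => hq0 i k ω)
        ((hDm i).2) (hq1 i ω) (hsupp i)
    have h1ρ : 1 - ∏ i, ρ i ≤ (1/2) * G ω := by
      have h1 := one_sub_prod_le Finset.univ ρ (fun i _ => hρ0 i) (fun i _ => hρ1 i)
      have h2 : ∑ i, (1 - ρ i) ≤ (1/2) * G ω := by
        rw [hGdef, Finset.mul_sum]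
        exact Finset.sum_le_sum fun i _ => hhel i
      linarith
    have htv := tv_le_hellinger (fun θ : X => ∏ i, Dm i (θ i)) (fun θ => ∏ i, q i (θ i) ω)
      hD0 hQ0 (by rw [← hW1]) hQ1
    rw [hρfac] at htv
    calc ∑ θ, |(∏ i, Dm i (θ i)) - empProd t (fun s : Fin t => ω (Fin.castLE htT s)) θ|
        = ∑ θ : X, |(∏ i, Dm i (θ i)) - ∏ i, q i (θ i) ω| :=
          Finset.sum_congr rfl fun θ _ => by rw [hempq ω θ]
      _ ≤ 2 * Real.sqrt 2 * Real.sqrt (1 - ∏ i, ρ i) := htv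
      _ ≤ 2 * Real.sqrt 2 * Real.sqrt ((1/2) * G ω) := by
          have := Real.sqrt_le_sqrt h1ρ
          nlinarith [Real.sqrt_nonneg (2:ℝ), Real.sqrt_nonneg (1 - ∏ i, ρ i)]
      _ = 2 * Real.sqrt (G ω) := by
          rw [Real.sqrt_mul (by norm_num : (0:ℝ) ≤ 1/2)]
          have h2 : Real.sqrt (1/2) = 1 / Real.sqrt 2 := by
            rw [one_div, one_div, Real.sqrt_inv]
          rw [h2]
          have : Real.sqrt 2 > 0 := Real.sqrt_pos.mpr (by norm_num)
          field_simp
  -- expectation of G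
  have hEG : ∑ ω : Fin T → X, (∏ s, W (ω s)) * G ω ≤ (n*K : ℝ)/t := by
    have swap : ∑ ω : Fin T → X, (∏ s, W (ω s)) * G ω
        = ∑ i, ∑ k, ∑ ω : Fin T → X, (∏ s, W (ω s)) *
            (if 0 < Dm i k then (q i k ω - Dm i k)^2 / Dm i k else 0) := by
      rw [hGdef]
      have : ∀ ω : Fin T → X, (∏ s, W (ω s)) * (∑ i, ∑ k,
          (if 0 < Dm i k then (q i k ω - Dm i k)^2 / Dm i k else 0))
          = ∑ i, ∑ k, (∏ s, W (ω s)) *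
            (if 0 < Dm i k then (q i k ω - Dm i k)^2 / Dm i k else 0) := by
        intro ω
        rw [Finset.mul_sum]
        exact Finset.sum_congr rfl fun i _ => Finset.mul_sum _ _ _
      rw [Finset.sum_congr rfl fun ω _ => this ω, Finset.sum_comm]
      exact Finset.sum_congr rfl fun i _ => Finset.sum_comm
    rw [swap]
    have hterm : ∀ (i : Fin n) (k : Fin K), ∑ ω : Fin T → X, (∏ s, W (ω s)) *
        (if 0 < Dm i k then (q i k ω - Dm i k)^2 / Dm i k else 0) ≤ 1/(t:ℝ) := by
      intro i k
      by_cases hp : 0 < Dm i k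
      · simp only [hp, if_true]
        have hmarg : ∑ y : X, W y * (if y i = k then (1:ℝ) else 0) = Dm i k := by
          rw [expect_single Dm (fun j => (hDm j).2) i (fun m => if m = k then (1:ℝ) else 0)]
          simp [mul_ite, mul_one, mul_zero]
        have hvar := var_bound W hW0 hW1 ht (Fin.castLE htT) (Fin.castLE_injective htT)
          (fun y => if y i = k then (1:ℝ) else 0)
          (fun y => by by_cases hy : y i = k <;> simp [hy])
        have hvar' : ∑ ω : Fin T → X, (∏ s, W (ω s)) * (q i k ω - Dm i k)^2
            ≤ Dm i k / t := by
          rw [hmarg] at hvar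
          exact hvar
        calc ∑ ω : Fin T → X, (∏ s, W (ω s)) * ((q i k ω - Dm i k)^2 / Dm i k)
            = (∑ ω : Fin T → X, (∏ s, W (ω s)) * (q i k ω - Dm i k)^2) / Dm i k := by
              rw [Finset.sum_div]
              exact Finset.sum_congr rfl fun ω _ => (mul_div_assoc _ _ _).symm
          _ ≤ (Dm i k / t) / Dm i k := (div_le_div_iff_of_pos_right hp).mpr hvar'
          _ = 1/(t:ℝ) := by field_simp
      · simp only [hp, if_false, mul_zero, Finset.sum_const_zero]
        positivity
    calc ∑ i : Fin n, ∑ k : Fin K, ∑ ω : Fin T → X, (∏ s, W (ω s)) *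
          (if 0 < Dm i k then (q i k ω - Dm i k)^2 / Dm i k else 0)
        ≤ ∑ i : Fin n, ∑ k : Fin K, 1/(t:ℝ) :=
          Finset.sum_le_sum fun i _ => Finset.sum_le_sum fun k _ => hterm i k
      _ = (n*K : ℝ)/t := by
          simp [Finset.sum_const]
          ring
  -- put everything together
  have step1 : ∑ ω : Fin T → X, (∏ s, W (ω s)) *
      ∑ θ, |(∏ i, Dm i (θ i)) - empProd t (fun s : Fin t => ω (Fin.castLE htT s)) θ|
      ≤ ∑ ω : Fin T → X, (∏ s, W (ω s)) * (2 * Real.sqrt (G ω)) := by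
    refine Finset.sum_le_sum fun ω _ => ?_
    by_cases hω : (∏ s, W (ω s)) = 0
    · rw [hω, zero_mul, zero_mul]
    · exact mul_le_mul_of_nonneg_left (pointwise ω hω)
        (Finset.prod_nonneg fun s _ => hW0 (ω s))
  have step2 : ∑ ω : Fin T → X, (∏ s, W (ω s)) * (2 * Real.sqrt (G ω))
      ≤ 2 * Real.sqrt ((n*K : ℝ)/t) := by
    have e : ∑ ω : Fin T → X, (∏ s, W (ω s)) * (2 * Real.sqrt (G ω))
        = 2 * ∑ ω : Fin T → X, (∏ s, W (ω s)) * Real.sqrt (G ω) := by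
      rw [Finset.mul_sum]
      exact Finset.sum_congr rfl fun ω _ => by ring
    rw [e]
    have h1 : ∑ ω : Fin T → X, (∏ s, W (ω s)) * Real.sqrt (G ω)
        ≤ Real.sqrt (∑ ω : Fin T → X, (∏ s, W (ω s)) * G ω) :=
      sum_sqrt_le Finset.univ _ _ (fun ω _ => Finset.prod_nonneg fun s _ => hW0 (ω s))
        (fun ω _ => hG0 ω) hw1
    have h2 : Real.sqrt (∑ ω : Fin T → X, (∏ s, W (ω s)) * G ω)
        ≤ Real.sqrt ((n*K : ℝ)/t) := Real.sqrt_le_sqrt hEG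
    linarith
  exact le_trans step1 step2

/-- For independent (product) type distributions, the algorithm that plays
an optimal strategy against the product of the empirical marginals has expected regret at
most `C·√(nKT)`, for a universal constant `C`. -/
theorem stmt5 :
    ∃ C : ℝ, 0 < C ∧
      ∀ (n L A K T : ℕ), 1 ≤ n → 2 ≤ L → 1 ≤ A → 1 ≤ K → 1 ≤ T →
      ∀ (Dm : Fin n → Fin K → ℝ), (∀ i, IsDist (Dm i)) →
      ∀ (u : Fin L → (Fin n → Fin A) → ℝ), (∀ ℓ a, u ℓ a ∈ Set.Icc (0 : ℝ) 1) →
      ∀ (v : Fin n → Fin L → Fin A → Fin K → ℝ),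
        (∀ i ℓ a k, v i ℓ a k ∈ Set.Icc (0 : ℝ) 1) →
      ∀ (br : (Fin n → Fin K) → (Fin L → ℝ) → (Fin n → Fin A)), IsBR u v br →
      ∀ (alg : (t : ℕ) → (Fin t → (Fin n → Fin K)) → (Fin L → ℝ)),
        -- the algorithm always plays a mixed strategy
        (∀ t h, alg t h ∈ stdSimplex ℝ (Fin L)) →
        -- from round 2 on, it plays optimally against the empirical product distribution
        (∀ (t : ℕ), 1 ≤ t → ∀ (h : Fin t → (Fin n → Fin K)),
          ∀ y ∈ stdSimplex ℝ (Fin L),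
            ∑ θ : Fin n → Fin K, empProd t h θ * leaderU u y (br θ y) ≤
              ∑ θ : Fin n → Fin K, empProd t h θ * leaderU u (alg t h) (br θ (alg t h))) →
      -- expected regret bound, where the joint type distribution is `D(θ) = ∏ i, Dm i (θ i)`
      (∑ ω : Fin T → (Fin n → Fin K), (∏ s, ∏ i, Dm i (ω s i)) *
          ∑ t : Fin T, (optUD (fun θ => ∏ i, Dm i (θ i)) u br -
            UD (fun θ => ∏ i, Dm i (θ i)) u br
              (alg t.val (fun s : Fin t.val => ω (Fin.castLE t.isLt.le s)))))
        ≤ C * Real.sqrt (((n * K * T : ℕ) : ℝ)) := by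
  refine ⟨9, by norm_num, ?_⟩
  intro n L A K T hn hL hA hK hT Dm hDm u hu v hv br hbr alg halg hopt
  have hD : IsDist (fun θ : Fin n → Fin K => ∏ i, Dm i (θ i)) := by
    constructor
    · exact fun θ => Finset.prod_nonneg fun i _ => (hDm i).1 (θ i)
    · rw [expect_pi (fun i k => Dm i k)]
      exact Finset.prod_eq_one fun i _ => (hDm i).2
  have hw0 : ∀ ω : Fin T → (Fin n → Fin K), 0 ≤ ∏ s, ∏ i, Dm i (ω s i) :=
    fun ω => Finset.prod_nonneg fun s _ => Finset.prod_nonneg fun i _ => (hDm i).1 _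
  have hw1 : ∑ ω : Fin T → (Fin n → Fin K), ∏ s, ∏ i, Dm i (ω s i) = 1 := by
    rw [expect_pi (fun (_ : Fin T) (y : Fin n → Fin K) => ∏ i, Dm i (y i))]
    refine Finset.prod_eq_one fun s _ => ?_
    rw [expect_pi (fun i k => Dm i k)]
    exact Finset.prod_eq_one fun i _ => (hDm i).2
  -- swap the sums
  have hswap : ∑ ω : Fin T → (Fin n → Fin K), (∏ s, ∏ i, Dm i (ω s i)) *
        ∑ t : Fin T, (optUD (fun θ => ∏ i, Dm i (θ i)) u br -
          UD (fun θ => ∏ i, Dm i (θ i)) u br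
            (alg t.val (fun s : Fin t.val => ω (Fin.castLE t.isLt.le s))))
      = ∑ t : Fin T, ∑ ω : Fin T → (Fin n → Fin K), (∏ s, ∏ i, Dm i (ω s i)) *
          (optUD (fun θ => ∏ i, Dm i (θ i)) u br -
            UD (fun θ => ∏ i, Dm i (θ i)) u br
              (alg t.val (fun s : Fin t.val => ω (Fin.castLE t.isLt.le s)))) := by
    rw [← Finset.sum_comm]
    exact Finset.sum_congr rfl fun ω _ => Finset.mul_sum _ _ _
  -- per-round bound
  have hround : ∀ t : Fin T, ∑ ω : Fin T → (Fin n → Fin K), (∏ s, ∏ i, Dm i (ω s i)) *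
          (optUD (fun θ => ∏ i, Dm i (θ i)) u br -
            UD (fun θ => ∏ i, Dm i (θ i)) u br
              (alg t.val (fun s : Fin t.val => ω (Fin.castLE t.isLt.le s))))
      ≤ if t.val = 0 then 1 else 4 * Real.sqrt ((n*K : ℝ)/t.val) := by
    intro t
    by_cases ht0 : t.val = 0
    · rw [if_pos ht0]
      calc ∑ ω : Fin T → (Fin n → Fin K), (∏ s, ∏ i, Dm i (ω s i)) *
            (optUD (fun θ => ∏ i, Dm i (θ i)) u br -
              UD (fun θ => ∏ i, Dm i (θ i)) u br
                (alg t.val (fun s : Fin t.val => ω (Fin.castLE t.isLt.le s))))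
          ≤ ∑ ω : Fin T → (Fin n → Fin K), (∏ s, ∏ i, Dm i (ω s i)) * 1 := by
            refine Finset.sum_le_sum fun ω _ => ?_
            exact mul_le_mul_of_nonneg_left (round_regret_triv hu hD (halg _ _)) (hw0 ω)
        _ = 1 := by simp only [mul_one]; exact hw1
    · rw [if_neg ht0]
      have ht1 : 1 ≤ t.val := Nat.one_le_iff_ne_zero.mpr ht0
      have htT : t.val ≤ T := t.isLt.le
      have hpt : ∀ ω : Fin T → (Fin n → Fin K),
          optUD (fun θ => ∏ i, Dm i (θ i)) u br -
            UD (fun θ => ∏ i, Dm i (θ i)) u br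
              (alg t.val (fun s : Fin t.val => ω (Fin.castLE t.isLt.le s)))
          ≤ 2 * ∑ θ, |(∏ i, Dm i (θ i)) -
              empProd t.val (fun s : Fin t.val => ω (Fin.castLE t.isLt.le s)) θ| := by
        intro ω
        exact round_regret hu hD _ (halg _ _)
          (hopt t.val ht1 (fun s : Fin t.val => ω (Fin.castLE t.isLt.le s)))
      calc ∑ ω : Fin T → (Fin n → Fin K), (∏ s, ∏ i, Dm i (ω s i)) *
            (optUD (fun θ => ∏ i, Dm i (θ i)) u br -
              UD (fun θ => ∏ i, Dm i (θ i)) u br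
                (alg t.val (fun s : Fin t.val => ω (Fin.castLE t.isLt.le s))))
          ≤ ∑ ω : Fin T → (Fin n → Fin K), (∏ s, ∏ i, Dm i (ω s i)) *
              (2 * ∑ θ, |(∏ i, Dm i (θ i)) -
                empProd t.val (fun s : Fin t.val => ω (Fin.castLE t.isLt.le s)) θ|) :=
            Finset.sum_le_sum fun ω _ => mul_le_mul_of_nonneg_left (hpt ω) (hw0 ω)
        _ = 2 * ∑ ω : Fin T → (Fin n → Fin K), (∏ s, ∏ i, Dm i (ω s i)) *
              ∑ θ, |(∏ i, Dm i (θ i)) -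
                empProd t.val (fun s : Fin t.val => ω (Fin.castLE t.isLt.le s)) θ| := by
            rw [Finset.mul_sum]
            exact Finset.sum_congr rfl fun ω _ => by ring
        _ ≤ 2 * (2 * Real.sqrt ((n*K : ℝ)/t.val)) := by
            have h2 := exp_tv_le ht1 htT Dm hDm
            linarith
        _ = 4 * Real.sqrt ((n*K : ℝ)/t.val) := by ring
  -- sum the per-round bounds
  have hsqnk0 : (0:ℝ) ≤ Real.sqrt ((n*K:ℝ)) := Real.sqrt_nonneg _
  have hsum : ∑ t : Fin T, (if t.val = 0 then (1:ℝ) else 4 * Real.sqrt ((n*K : ℝ)/t.val))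
      ≤ 1 + 8 * Real.sqrt ((n*K:ℝ)) * Real.sqrt T := by
    have hrw : ∑ t : Fin T, (if t.val = 0 then (1:ℝ) else 4 * Real.sqrt ((n*K : ℝ)/t.val))
        = ∑ m ∈ Finset.range T, (if m = 0 then (1:ℝ) else 4 * Real.sqrt ((n*K : ℝ)/m)) :=
      Fin.sum_univ_eq_sum_range (fun m => if m = 0 then (1:ℝ) else 4 * Real.sqrt ((n*K:ℝ)/m)) T
    rw [hrw]
    obtain ⟨M, rfl⟩ : ∃ M, T = M + 1 := ⟨T - 1, by omega⟩
    rw [Finset.sum_range_succ']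
    simp only [Nat.succ_ne_zero, if_false, if_pos rfl]
    have hterm : ∀ m : ℕ, 4 * Real.sqrt ((n*K : ℝ)/((m+1 : ℕ) : ℝ))
        = 4 * Real.sqrt ((n*K:ℝ)) * (1 / Real.sqrt ((m:ℝ)+1)) := by
      intro m
      rw [show ((n*K : ℝ))/(((m+1 : ℕ)) : ℝ) = (n*K : ℝ) * (1/((m:ℝ)+1)) by push_cast; ring,
        Real.sqrt_mul (by positivity), one_div, Real.sqrt_inv, ← one_div]
      ring
    have hbody : ∑ m ∈ Finset.range M, (if m + 1 = 0 then (1:ℝ)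
          else 4 * Real.sqrt ((n*K : ℝ)/((m+1:ℕ) : ℝ)))
        = ∑ m ∈ Finset.range M, 4 * Real.sqrt ((n*K:ℝ)) * (1 / Real.sqrt ((m:ℝ)+1)) := by
      refine Finset.sum_congr rfl fun m _ => ?_
      rw [if_neg (Nat.succ_ne_zero m), hterm m]
    have hle : ∑ m ∈ Finset.range M, 4 * Real.sqrt ((n*K:ℝ)) * (1 / Real.sqrt ((m:ℝ)+1))
        ≤ 4 * Real.sqrt ((n*K:ℝ)) * (2 * Real.sqrt M) := by
      rw [← Finset.mul_sum]
      exact mul_le_mul_of_nonneg_left (sum_inv_sqrt_le M) (by positivity)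
    have hMT : Real.sqrt M ≤ Real.sqrt ((M:ℝ)+1) := Real.sqrt_le_sqrt (by linarith)
    simp only [if_true]
    rw [Finset.sum_congr rfl fun m _ => hterm m]
    have h8 : 4 * Real.sqrt ((n*K:ℝ)) * (2 * Real.sqrt M)
        ≤ 8 * Real.sqrt ((n*K:ℝ)) * Real.sqrt ((M:ℝ)+1) := by
      nlinarith [hMT, hsqnk0, Real.sqrt_nonneg ((M:ℝ))]
    push_cast
    linarith [hle]
  -- combine
  have h1 : Real.sqrt ((n*K:ℝ)) * Real.sqrt (T:ℝ) = Real.sqrt (((n*K*T : ℕ) : ℝ)) := by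
    rw [← Real.sqrt_mul (by positivity)]
    congr 1
    push_cast
    ring
  have h2 : (1:ℝ) ≤ Real.sqrt (((n*K*T : ℕ) : ℝ)) := by
    rw [show (1:ℝ) = Real.sqrt 1 from Real.sqrt_one.symm]
    apply Real.sqrt_le_sqrt
    have h3 : (1:ℕ) ≤ n*K*T := Nat.one_le_iff_ne_zero.mpr (by positivity)
    exact_mod_cast h3
  calc ∑ ω : Fin T → (Fin n → Fin K), (∏ s, ∏ i, Dm i (ω s i)) *
        ∑ t : Fin T, (optUD (fun θ => ∏ i, Dm i (θ i)) u br -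
          UD (fun θ => ∏ i, Dm i (θ i)) u br
            (alg t.val (fun s : Fin t.val => ω (Fin.castLE t.isLt.le s))))
      = ∑ t : Fin T, ∑ ω : Fin T → (Fin n → Fin K), (∏ s, ∏ i, Dm i (ω s i)) *
          (optUD (fun θ => ∏ i, Dm i (θ i)) u br -
            UD (fun θ => ∏ i, Dm i (θ i)) u br
              (alg t.val (fun s : Fin t.val => ω (Fin.castLE t.isLt.le s)))) := hswap
    _ ≤ ∑ t : Fin T, (if t.val = 0 then (1:ℝ) else 4 * Real.sqrt ((n*K : ℝ)/t.val)) :=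
        Finset.sum_le_sum fun t _ => hround t
    _ ≤ 1 + 8 * Real.sqrt ((n*K:ℝ)) * Real.sqrt T := hsum
    _ ≤ 9 * Real.sqrt (((n*K*T : ℕ) : ℝ)) := by
        rw [mul_assoc, h1]
        linarith
end
end

section
/- Let D and D̂ be two distributions on [K]^n, let x* maximize U_D over Δ([L]) and let x̂ maximize U_{D̂} over Δ([L]). Then U_D(x*) − U_D(x̂) ≤ 4·δ(D, D̂), where δ denotes the total variation distance δ(D, D̂) = (1/2)·Σ_{θ ∈ [K]^n} |D(θ) − D̂(θ)|. -/
open Finset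

noncomputable section

/-- If `x*` maximizes `U_D` over `Δ([L])` and `x̂` maximizes `U_D̂` over
`Δ([L])`, then `U_D(x*) − U_D(x̂) ≤ 4·δ(D, D̂)` where `δ` is the total variation distance. -/
theorem stmt8 (n L A K : ℕ) (hn : 1 ≤ n) (hL : 2 ≤ L)
    (D Dhat : (Fin n → Fin K) → ℝ) (hD : IsDist D) (hDhat : IsDist Dhat)
    (u : Fin L → (Fin n → Fin A) → ℝ) (hu : ∀ ℓ a, u ℓ a ∈ Set.Icc (0 : ℝ) 1)
    (v : Fin n → Fin L → Fin A → Fin K → ℝ)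
    (hv : ∀ i ℓ a k, v i ℓ a k ∈ Set.Icc (0 : ℝ) 1)
    (br : (Fin n → Fin K) → (Fin L → ℝ) → (Fin n → Fin A)) (hbr : IsBR u v br)
    (xstar xhat : Fin L → ℝ)
    (hxstar : xstar ∈ stdSimplex ℝ (Fin L))
    (hxstarOpt : ∀ y ∈ stdSimplex ℝ (Fin L), UD D u br y ≤ UD D u br xstar)
    (hxhat : xhat ∈ stdSimplex ℝ (Fin L))
    (hxhatOpt : ∀ y ∈ stdSimplex ℝ (Fin L), UD Dhat u br y ≤ UD Dhat u br xhat) :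
    UD D u br xstar - UD D u br xhat ≤
      4 * ((1 / 2) * ∑ θ : Fin n → Fin K, |D θ - Dhat θ|) := by
  set δ := ∑ θ : Fin n → Fin K, |D θ - Dhat θ| with hδ
  have hLU : ∀ x ∈ stdSimplex ℝ (Fin L), ∀ a, leaderU u x a ∈ Set.Icc (0:ℝ) 1 := by
    intro x hx a
    constructor
    · exact Finset.sum_nonneg fun ℓ _ => mul_nonneg (hx.1 ℓ) (hu ℓ a).1
    · calc ∑ ℓ, x ℓ * u ℓ a ≤ ∑ ℓ, x ℓ := by
            apply Finset.sum_le_sum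
            intro ℓ _
            nlinarith [(hu ℓ a).2, hx.1 ℓ, (hu ℓ a).1]
        _ = 1 := hx.2
  have key : ∀ x ∈ stdSimplex ℝ (Fin L), |UD D u br x - UD Dhat u br x| ≤ δ := by
    intro x hx
    have : UD D u br x - UD Dhat u br x
        = ∑ θ, (D θ - Dhat θ) * leaderU u x (br θ x) := by
      simp [UD, ← Finset.sum_sub_distrib, sub_mul]
    rw [this]
    calc |∑ θ, (D θ - Dhat θ) * leaderU u x (br θ x)|
        ≤ ∑ θ, |(D θ - Dhat θ) * leaderU u x (br θ x)| := Finset.abs_sum_le_sum_abs _ _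
      _ ≤ ∑ θ, |D θ - Dhat θ| := by
          apply Finset.sum_le_sum
          intro θ _
          rw [abs_mul]
          have h1 := hLU x hx (br θ x)
          have h2 : |leaderU u x (br θ x)| ≤ 1 := by
            rw [abs_le]; constructor <;> [linarith [h1.1]; exact h1.2]
          nlinarith [abs_nonneg (D θ - Dhat θ)]
  have h1 := key xstar hxstar
  have h2 := key xhat hxhat
  have h3 := hxhatOpt xstar hxstar
  rw [abs_le] at h1 h2
  ring_nf
  linarith [h1.2, h2.1]
end
end

section
/- In the lower-bound game instance with type distribution D_σ from the class 𝓒, for every leader mixed strategy x ∈ Δ(Θ): U(D_σ, D_σ) − U(x, D_σ) = (ε/c)·Disagree(x, D_σ). In particular, the mixed strategy x* = D_σ (viewing the probability vector D_σ as an element of Δ(Θ)) maximizes U(·, D_σ) over Δ(Θ). -/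
open Finset

noncomputable section

/-- The type space is `Θ = {±1, …, ±c}`, modeled as `Fin c × Bool` with `(j, true) = +j`
and `(j, false) = −j`. The distribution `D_σ ∈ 𝓒` parametrized by `σ : Fin c → Bool`
(`σ j = true` meaning `σ_j = +1`) and `ε`:
`D_σ(+j) = (1 + σ_j ε)/(2c)`, `D_σ(−j) = (1 − σ_j ε)/(2c)`. -/
def Dsig (c : ℕ) (ε : ℝ) (σ : Fin c → Bool) (p : Fin c × Bool) : ℝ :=
  (1 + (if p.2 = σ p.1 then ε else -ε)) / (2 * c)

/-- The leader's expected utility in the lower-bound instance, under strategy `x ∈ Δ(Θ)`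
and type distribution `D`:
`U(x, D) = ∑_j (D(+j)·1[x(+j) ≥ x(−j)] + D(−j)·1[x(+j) < x(−j)])`. -/
def Ulb (c : ℕ) (x D : (Fin c × Bool) → ℝ) : ℝ :=
  ∑ j : Fin c,
    (D (j, true) * (if x (j, false) ≤ x (j, true) then 1 else 0) +
     D (j, false) * (if x (j, true) < x (j, false) then 1 else 0))

/-- The disagreement count `Disagree(x, D_σ)`: the number of indices `j` on which the
indicator `1[x(+j) ≥ x(−j)]` differs from `1[σ_j = +1]`. -/
def Disagree (c : ℕ) (x : (Fin c × Bool) → ℝ) (σ : Fin c → Bool) : ℕ :=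
  {j : Fin c | ¬ ((x (j, false) ≤ x (j, true)) ↔ σ j = true)}.ncard

/-- In the lower-bound instance with type distribution `D_σ ∈ 𝓒`, for
every leader mixed strategy `x`: `U(D_σ, D_σ) − U(x, D_σ) = (ε/c)·Disagree(x, D_σ)`; in
particular the strategy `x* = D_σ` maximizes `U(·, D_σ)` over `Δ(Θ)`. -/
theorem stmt10 (c : ℕ) (hc : 1 ≤ c) (ε : ℝ) (hε0 : 0 < ε) (hε1 : ε < 1)
    (σ : Fin c → Bool)
    (x : (Fin c × Bool) → ℝ) (hx : x ∈ stdSimplex ℝ (Fin c × Bool)) :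
    Ulb c (Dsig c ε σ) (Dsig c ε σ) - Ulb c x (Dsig c ε σ) =
      (ε / c) * (Disagree c x σ : ℝ) ∧
    Ulb c x (Dsig c ε σ) ≤ Ulb c (Dsig c ε σ) (Dsig c ε σ) := by
  have hcR : (0:ℝ) < c := by exact_mod_cast hc
  have h2c : (0:ℝ) < 2 * c := by linarith
  -- per-index value of Ulb
  have term : ∀ (y : (Fin c × Bool) → ℝ) (j : Fin c),
      (Dsig c ε σ (j, true) * (if y (j, false) ≤ y (j, true) then 1 else 0) +
       Dsig c ε σ (j, false) * (if y (j, true) < y (j, false) then 1 else 0)) =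
      (if (y (j, false) ≤ y (j, true)) ↔ σ j = true then (1+ε)/(2*c) else (1-ε)/(2*c)) := by
    intro y j
    rcases le_or_gt (y (j, false)) (y (j, true)) with hle | hlt
    · have h2 : ¬ y (j, true) < y (j, false) := not_lt.mpr hle
      cases hσ : σ j <;> simp [Dsig, hσ, hle, h2] <;> ring_nf
    · have h1 : ¬ y (j, false) ≤ y (j, true) := not_le.mpr hlt
      cases hσ : σ j <;> simp [Dsig, hσ, h1, hlt] <;> ring_nf
  have cond_self : ∀ j : Fin c,
      ((Dsig c ε σ (j, false) ≤ Dsig c ε σ (j, true)) ↔ σ j = true) := by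
    intro j
    cases hσ : σ j <;> simp [Dsig, hσ] <;> gcongr <;> linarith
  have hself : Ulb c (Dsig c ε σ) (Dsig c ε σ) = ∑ _j : Fin c, (1+ε)/(2*c) := by
    unfold Ulb
    refine Finset.sum_congr rfl fun j _ => ?_
    rw [term, if_pos (cond_self j)]
  have hx' : Ulb c x (Dsig c ε σ) =
      ∑ j : Fin c, (if (x (j, false) ≤ x (j, true)) ↔ σ j = true
        then (1+ε)/(2*c) else (1-ε)/(2*c)) := by
    unfold Ulb
    exact Finset.sum_congr rfl fun j _ => term x j
  have hdiff : Ulb c (Dsig c ε σ) (Dsig c ε σ) - Ulb c x (Dsig c ε σ) =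
      ∑ j : Fin c, (if (x (j, false) ≤ x (j, true)) ↔ σ j = true then 0 else ε/c) := by
    rw [hself, hx', ← Finset.sum_sub_distrib]
    refine Finset.sum_congr rfl fun j _ => ?_
    by_cases h : (x (j, false) ≤ x (j, true)) ↔ σ j = true <;> simp [h]
    field_simp
    ring
  have hcard : {j : Fin c | ¬ ((x (j, false) ≤ x (j, true)) ↔ σ j = true)}.ncard =
      (Finset.univ.filter fun j : Fin c =>
        ¬ ((x (j, false) ≤ x (j, true)) ↔ σ j = true)).card := by
    rw [show {j : Fin c | ¬ ((x (j, false) ≤ x (j, true)) ↔ σ j = true)} =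
        ↑(Finset.univ.filter fun j : Fin c =>
          ¬ ((x (j, false) ≤ x (j, true)) ↔ σ j = true)) by ext j; simp,
      Set.ncard_coe_finset]
  have key : Ulb c (Dsig c ε σ) (Dsig c ε σ) - Ulb c x (Dsig c ε σ) =
      (ε / c) * (Disagree c x σ : ℝ) := by
    rw [hdiff, Finset.sum_ite, Finset.sum_const, Finset.sum_const, Disagree, hcard]
    simp [mul_comm]
  refine ⟨key, ?_⟩
  have hnn : (0:ℝ) ≤ (ε / c) * (Disagree c x σ : ℝ) := by positivity
  linarith [key]
end
end

section
/- Let 𝓦 be the set of matrices W ∈ [A]^{n×K} with nonempty best-response region R(W), and suppose T ≥ |𝓦|. For each W ∈ 𝓦, let a^{W,1}, ..., a^{W,T} be i.i.d. samples from the distribution P(· | R(W)) on [A]^n, drawn independently across regions, and let Û_N(x, R(W)) = (1/N)·Σ_{s=1}^N u(x, a^{W,s}). Then with probability at least 1 − 1/T², simultaneously for all W ∈ 𝓦, all N ∈ {1, ..., T}, and all x ∈ R(W): |U(x, R(W)) − Û_N(x, R(W))| ≤ sqrt(4(L+1)·log(3T)/N). -/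
/-!
Since `u(x, a)` is linear in `x`, for `x` in the simplex the deviation
`|U(x, R(W)) - Û_N(x, R(W))|` is at most the deviation of some pure strategy `ℓ`. For a fixed
region `W`, sample size `N` and pure strategy `ℓ`, the bound `cosh t ≤ exp (t² / 2)` on the
moment generating function of a centred variable with values in `[-1, 1]` gives Hoeffding's
inequality: a deviation above `ε_N = √(4(L+1) log(3T) / N)` has probability at most
`2 exp (-N ε_N² / 2) = 2 (3T)^(-2(L+1))`. A union bound over the at most `T · T · L` triples
`(W, N, ℓ)` leaves at most `1 / T²`.
-/

open Finset

noncomputable section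

/-- The joint-action distribution induced by region `R(W)`:
`P(a | R(W)) = ∑_{θ : W(θ) = a} D(θ)`. -/
def Pact {n A K : ℕ} (D : (Fin n → Fin K) → ℝ) (W : Fin n → Fin K → Fin A)
    (a : Fin n → Fin A) : ℝ :=
  ∑ θ : Fin n → Fin K, if (fun i => W i (θ i)) = a then D θ else 0

/-- The expected utility of playing `x` inside region `R(W)`:
`U(x, R(W)) = ∑_a P(a | R(W))·u(x, a)`. -/
def UReg {n L A K : ℕ} (D : (Fin n → Fin K) → ℝ)
    (u : Fin L → (Fin n → Fin A) → ℝ) (W : Fin n → Fin K → Fin A)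
    (x : Fin L → ℝ) : ℝ :=
  ∑ a : Fin n → Fin A, Pact D W a * leaderU u x a

section FiniteProbability

variable {β : Type*} [Fintype β]

lemma IsDist.pi {ι : Type*} [Fintype ι] [DecidableEq ι] {Q : ι → β → ℝ}
    (hQ : ∀ i, IsDist (Q i)) : IsDist fun ω : ι → β => ∏ i, Q i (ω i) :=
  ⟨fun ω => prod_nonneg fun i _ => (hQ i).1 (ω i), by
    rw [← Fintype.prod_sum]
    exact prod_eq_one fun i _ => (hQ i).2⟩

lemma IsDist.one_sub_le_sum_ite {p : β → ℝ} (hp : IsDist p) (E : β → Prop) [DecidablePred E]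
    {δ : ℝ} (hδ : ∑ b ∈ univ.filter (fun b => ¬E b), p b ≤ δ) :
    1 - δ ≤ ∑ b, if E b then p b else 0 := by
  have hsplit := sum_filter_add_sum_filter_not univ E p
  rw [hp.2, sum_filter] at hsplit
  linarith

lemma sum_filter_le_sum_sum_filter {ι : Type*} {p : β → ℝ} (hp : ∀ b, 0 ≤ p b)
    {E : β → Prop} [DecidablePred E] {s : Finset ι} {F : ι → β → Prop}
    [∀ i, DecidablePred (F i)] (hEF : ∀ b, E b → ∃ i ∈ s, F i b) :
    ∑ b ∈ univ.filter E, p b ≤ ∑ i ∈ s, ∑ b ∈ univ.filter (F i), p b := by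
  simp only [sum_filter]
  rw [sum_comm]
  refine sum_le_sum fun b _ => ?_
  split_ifs with hb
  · obtain ⟨i, hi, hFi⟩ := hEF b hb
    refine le_trans ?_ (single_le_sum (fun j _ => ?_) hi)
    · rw [if_pos hFi]
    · split_ifs <;> simp [hp b]
  · exact sum_nonneg fun j _ => by split_ifs <;> simp [hp b]

lemma sum_filter_comp_eval_prod {M : Type*} [Fintype M] [DecidableEq M] {Q : M → β → ℝ}
    (hQ : ∀ m, ∑ b, Q m b = 1) (m₀ : M) (E : β → Prop) [DecidablePred E] :
    ∑ ω ∈ univ.filter (fun ω : M → β => E (ω m₀)), ∏ m, Q m (ω m) =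
      ∑ b ∈ univ.filter E, Q m₀ b := by
  -- `Q` with its `m₀`-th factor cut down to `E`: the product then factorises over `m`.
  set f : M → β → ℝ := fun m b => if m = m₀ then (if E b then Q m b else 0) else Q m b
  have hprod : ∀ ω : M → β, ∏ m, f m (ω m) = if E (ω m₀) then ∏ m, Q m (ω m) else 0 := by
    intro ω
    split_ifs with hE
    · exact prod_congr rfl fun m _ => by
        by_cases hm : m = m₀
        · subst hm; simp [f, hE]
        · simp [f, hm]
    · exact prod_eq_zero (mem_univ m₀) (by simp [f, hE])
  have hsum : ∀ m, ∑ b, f m b = if m = m₀ then ∑ b ∈ univ.filter E, Q m₀ b else 1 := by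
    intro m
    by_cases hm : m = m₀
    · subst hm; simp [f, sum_filter]
    · simp [f, hm, hQ m]
  rw [sum_filter]
  simp_rw [← hprod]
  rw [← Fintype.prod_sum, Finset.prod_congr rfl fun m _ => hsum m, prod_ite_eq']
  simp

end FiniteProbability

section Hoeffding

open Real

variable {β : Type*} [Fintype β]

lemma exp_mul_le_cosh_add_mul_sinh (t : ℝ) {z : ℝ} (hz : z ∈ Set.Icc (-1 : ℝ) 1) :
    exp (t * z) ≤ cosh t + z * sinh t := by
  obtain ⟨hz₁, hz₂⟩ := hz
  have hconv := convexOn_exp.2 (Set.mem_univ (-t)) (Set.mem_univ t)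
    (by linarith : (0 : ℝ) ≤ (1 - z) / 2) (by linarith : (0 : ℝ) ≤ (1 + z) / 2) (by ring)
  simp only [smul_eq_mul] at hconv
  rw [show (1 - z) / 2 * -t + (1 + z) / 2 * t = t * z by ring] at hconv
  rw [cosh_eq, sinh_eq]
  linarith

lemma IsDist.sum_mul_exp_le {q : β → ℝ} (hq : IsDist q) {h : β → ℝ}
    (hh : ∀ b, h b ∈ Set.Icc (-1 : ℝ) 1) (hmean : ∑ b, q b * h b = 0) (t : ℝ) :
    ∑ b, q b * exp (t * h b) ≤ exp (t ^ 2 / 2) :=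
  calc ∑ b, q b * exp (t * h b) ≤ ∑ b, q b * (cosh t + h b * sinh t) :=
        sum_le_sum fun b _ => mul_le_mul_of_nonneg_left
          (exp_mul_le_cosh_add_mul_sinh t (hh b)) (hq.1 b)
    _ = (∑ b, q b) * cosh t + (∑ b, q b * h b) * sinh t := by
        simp only [sum_mul, ← sum_add_distrib]
        exact sum_congr rfl fun b _ => by ring
    _ = cosh t := by rw [hq.2, hmean]; ring
    _ ≤ exp (t ^ 2 / 2) := cosh_le_exp_half_sq t

lemma sum_filter_le_exp_mul_sum_mul_exp {w S : β → ℝ} (hw : ∀ b, 0 ≤ w b) {t : ℝ}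
    (ht : 0 ≤ t) (r : ℝ) :
    ∑ b ∈ univ.filter (fun b => r ≤ S b), w b ≤ exp (-(t * r)) * ∑ b, w b * exp (t * S b) :=
  calc ∑ b ∈ univ.filter (fun b => r ≤ S b), w b
      ≤ ∑ b ∈ univ.filter (fun b => r ≤ S b), w b * exp (t * S b - t * r) :=
        sum_le_sum fun b hb => le_mul_of_one_le_right (hw b) (one_le_exp (by
          have := (mem_filter.1 hb).2
          nlinarith))
    _ ≤ ∑ b, w b * exp (t * S b - t * r) :=
        sum_le_sum_of_subset_of_nonneg (filter_subset _ _)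
          fun b _ _ => mul_nonneg (hw b) (exp_nonneg _)
    _ = exp (-(t * r)) * ∑ b, w b * exp (t * S b) := by
        rw [mul_sum]
        exact sum_congr rfl fun b _ => by rw [sub_eq_add_neg, exp_add]; ring

lemma sum_prod_mul_exp_sum_eq_pow {ι : Type*} [Fintype ι] [DecidableEq ι] {q : β → ℝ}
    (hq : ∑ b, q b = 1) (I : Finset ι) (f : β → ℝ) :
    ∑ c : ι → β, (∏ i, q (c i)) * exp (∑ i ∈ I, f (c i)) = (∑ b, q b * exp (f b)) ^ I.card := by
  have hfactor : ∀ c : ι → β, (∏ i, q (c i)) * exp (∑ i ∈ I, f (c i)) =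
      ∏ i, q (c i) * (if i ∈ I then exp (f (c i)) else 1) := by
    intro c
    rw [exp_sum, prod_mul_distrib, prod_ite_mem, univ_inter]
  have hrow : ∀ i, ∑ b, q b * (if i ∈ I then exp (f b) else 1) =
      if i ∈ I then ∑ b, q b * exp (f b) else 1 := by
    intro i
    split_ifs <;> simp [hq]
  simp_rw [hfactor]
  rw [← Fintype.prod_sum fun i b => q b * if i ∈ I then exp (f b) else 1,
    prod_congr rfl fun i _ => hrow i, prod_ite_mem, univ_inter, prod_const]

lemma IsDist.sum_prod_filter_le_sum_le {ι : Type*} [Fintype ι] [DecidableEq ι] {q : β → ℝ}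
    (hq : IsDist q) {h : β → ℝ} (hh : ∀ b, h b ∈ Set.Icc (-1 : ℝ) 1)
    (hmean : ∑ b, q b * h b = 0) (I : Finset ι) {ε : ℝ} (hε : 0 ≤ ε) :
    ∑ c ∈ univ.filter (fun c : ι → β => I.card * ε ≤ ∑ i ∈ I, h (c i)), ∏ i, q (c i) ≤
      exp (-(I.card * ε ^ 2 / 2)) :=
  calc _ ≤ exp (-(ε * (I.card * ε))) *
        ∑ c : ι → β, (∏ i, q (c i)) * exp (∑ i ∈ I, ε * h (c i)) := by
        simp_rw [← mul_sum]
        exact sum_filter_le_exp_mul_sum_mul_exp (fun c => (IsDist.pi fun _ => hq).1 c) hε _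
    _ = exp (-(ε * (I.card * ε))) * (∑ b, q b * exp (ε * h b)) ^ I.card := by
        rw [sum_prod_mul_exp_sum_eq_pow hq.2 I fun b => ε * h b]
    _ ≤ exp (-(ε * (I.card * ε))) * exp (ε ^ 2 / 2) ^ I.card := by
        gcongr
        · exact sum_nonneg fun b _ => mul_nonneg (hq.1 b) (exp_nonneg _)
        · exact hq.sum_mul_exp_le hh hmean ε
    _ = exp (-(I.card * ε ^ 2 / 2)) := by
        rw [← exp_nat_mul, ← exp_add]
        ring_nf

lemma IsDist.sum_prod_filter_lt_abs_sum_le {ι : Type*} [Fintype ι] [DecidableEq ι]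
    {q : β → ℝ} (hq : IsDist q) {h : β → ℝ} (hh : ∀ b, h b ∈ Set.Icc (-1 : ℝ) 1)
    (hmean : ∑ b, q b * h b = 0) (I : Finset ι) {ε : ℝ} (hε : 0 ≤ ε) :
    ∑ c ∈ univ.filter (fun c : ι → β => I.card * ε < |∑ i ∈ I, h (c i)|), ∏ i, q (c i) ≤
      2 * exp (-(I.card * ε ^ 2 / 2)) := by
  classical
  have hneg : ∀ b, -h b ∈ Set.Icc (-1 : ℝ) 1 := fun b =>
    ⟨neg_le_neg (hh b).2, by linarith [(hh b).1]⟩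
  have hneg_mean : ∑ b, q b * -h b = 0 := by simp [hmean]
  set p : (ι → β) → ℝ := fun c => ∏ i, q (c i)
  set upper := univ.filter (fun c : ι → β => I.card * ε ≤ ∑ i ∈ I, h (c i))
  set lower := univ.filter (fun c : ι → β => I.card * ε ≤ ∑ i ∈ I, -h (c i))
  have hsub : univ.filter (fun c : ι → β => I.card * ε < |∑ i ∈ I, h (c i)|) ⊆
      upper ∪ lower := by
    intro c hc
    rw [mem_filter] at hc
    rw [mem_union, mem_filter, mem_filter, sum_neg_distrib]
    rcases le_abs'.1 hc.2.le with hneg_large | hpos_large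
    · exact Or.inr ⟨mem_univ c, by linarith⟩
    · exact Or.inl ⟨mem_univ c, hpos_large⟩
  have hp : ∀ c, 0 ≤ p c := (IsDist.pi fun _ : ι => hq).1
  calc _ ≤ ∑ c ∈ upper ∪ lower, p c := sum_le_sum_of_subset_of_nonneg hsub fun c _ _ => hp c
    _ ≤ ∑ c ∈ upper, p c + ∑ c ∈ lower, p c := by
        rw [← sum_union_inter]
        exact le_add_of_nonneg_right (sum_nonneg fun c _ => hp c)
    _ ≤ exp (-(I.card * ε ^ 2 / 2)) + exp (-(I.card * ε ^ 2 / 2)) :=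
        add_le_add (hq.sum_prod_filter_le_sum_le hh hmean I hε)
          (hq.sum_prod_filter_le_sum_le hneg hneg_mean I hε)
    _ = 2 * exp (-(I.card * ε ^ 2 / 2)) := (two_mul _).symm

lemma IsDist.sub_sum_mul_mem_Icc {q : β → ℝ} (hq : IsDist q) {g : β → ℝ}
    (hg : ∀ b, g b ∈ Set.Icc (0 : ℝ) 1) (b : β) :
    g b - ∑ b', q b' * g b' ∈ Set.Icc (-1 : ℝ) 1 := by
  have hmean_nonneg : 0 ≤ ∑ b', q b' * g b' :=
    sum_nonneg fun b' _ => mul_nonneg (hq.1 b') (hg b').1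
  have hmean_le_one : ∑ b', q b' * g b' ≤ 1 :=
    (sum_le_sum fun b' _ => mul_le_of_le_one_right (hq.1 b') (hg b').2).trans hq.2.le
  constructor <;> linarith [(hg b).1, (hg b).2]

lemma sum_mul_sub_sum_mul_eq_zero {q : β → ℝ} (hq : ∑ b, q b = 1) (g : β → ℝ) :
    ∑ b, q b * (g b - ∑ b', q b' * g b') = 0 := by
  simp only [mul_sub, sum_sub_distrib, ← sum_mul, hq, one_mul, sub_self]

lemma sum_prod_prod_filter_lt_abs_sum_sub_le {M ι : Type*} [Fintype M] [DecidableEq M]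
    [Fintype ι] [DecidableEq ι] {Q : M → β → ℝ} (hQ : ∀ m, IsDist (Q m)) (m₀ : M)
    {g : β → ℝ} (hg : ∀ b, g b ∈ Set.Icc (0 : ℝ) 1) (I : Finset ι) {ε : ℝ} (hε : 0 ≤ ε) :
    ∑ ω ∈ univ.filter (fun ω : M → ι → β =>
        I.card * ε < |∑ i ∈ I, (g (ω m₀ i) - ∑ b, Q m₀ b * g b)|), ∏ m, ∏ i, Q m (ω m i) ≤
      2 * exp (-(I.card * ε ^ 2 / 2)) := by
  rw [sum_filter_comp_eval_prod (fun m => (IsDist.pi fun _ : ι => hQ m).2) m₀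
    (fun c : ι → β => I.card * ε < |∑ i ∈ I, (g (c i) - ∑ b, Q m₀ b * g b)|)]
  exact (hQ m₀).sum_prod_filter_lt_abs_sum_le ((hQ m₀).sub_sum_mul_mem_Icc hg)
    (sum_mul_sub_sum_mul_eq_zero (hQ m₀).2 g) I hε

end Hoeffding

lemma exists_abs_sum_mul_le_abs {ι : Type*} [Fintype ι] {x : ι → ℝ}
    (hx : x ∈ stdSimplex ℝ ι) (d : ι → ℝ) : ∃ i, |∑ j, x j * d j| ≤ |d i| := by
  have : Nonempty ι := by
    by_contra hempty
    rw [not_nonempty_iff] at hempty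
    simpa using hx.2
  obtain ⟨i, hi⟩ := Finite.exists_max fun j => |d j|
  refine ⟨i, ?_⟩
  calc |∑ j, x j * d j| ≤ ∑ j, |x j * d j| := abs_sum_le_sum_abs _ _
    _ = ∑ j, x j * |d j| := sum_congr rfl fun j _ => by rw [abs_mul, abs_of_nonneg (hx.1 j)]
    _ ≤ ∑ j, x j * |d i| := sum_le_sum fun j _ => mul_le_mul_of_nonneg_left (hi j) (hx.1 j)
    _ = |d i| := by rw [← sum_mul, hx.2, one_mul]

section Game

variable {n L A K : ℕ}

lemma isDist_pact {D : (Fin n → Fin K) → ℝ} (hD : IsDist D) (W : Fin n → Fin K → Fin A) :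
    IsDist (Pact D W) := by
  refine ⟨fun a => sum_nonneg fun θ _ => ?_, ?_⟩
  · split_ifs
    exacts [hD.1 θ, le_rfl]
  · simp only [Pact]
    rw [sum_comm]
    simpa using hD.2

lemma exists_lt_abs_sum_sub_of_lt_abs_UReg_sub {T N : ℕ} (hN : 1 ≤ N) (hNT : N ≤ T)
    (D : (Fin n → Fin K) → ℝ) (u : Fin L → (Fin n → Fin A) → ℝ) (W : Fin n → Fin K → Fin A)
    {x : Fin L → ℝ} (hx : x ∈ stdSimplex ℝ (Fin L)) (c : Fin T → Fin n → Fin A) {ε : ℝ}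
    (h : ε < |UReg D u W x -
      (1 / (N : ℝ)) * ∑ s : Fin T, (if (s : ℕ) < N then leaderU u x (c s) else 0)|) :
    ∃ ℓ, N * ε < |∑ s ∈ univ.filter (fun s : Fin T => (s : ℕ) < N),
      (u ℓ (c s) - ∑ a, Pact D W a * u ℓ a)| := by
  set I := univ.filter (fun s : Fin T => (s : ℕ) < N)
  have hI : I.card = N := by simp [I, Fin.card_filter_val_lt, hNT]
  have hNpos : (0 : ℝ) < N := by exact_mod_cast hN
  set d : Fin L → ℝ := fun ℓ => ∑ a, Pact D W a * u ℓ a - (1 / (N : ℝ)) * ∑ s ∈ I, u ℓ (c s)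
  have hlin : UReg D u W x -
      (1 / (N : ℝ)) * ∑ s : Fin T, (if (s : ℕ) < N then leaderU u x (c s) else 0) =
        ∑ ℓ, x ℓ * d ℓ := by
    simp only [UReg, leaderU, ← sum_filter, d, mul_sub, sum_sub_distrib, mul_sum]
    rw [sum_comm (s := univ), sum_comm (s := I)]
    congr 1 <;> exact sum_congr rfl fun _ _ => sum_congr rfl fun _ _ => by ring
  obtain ⟨ℓ, hℓ⟩ := exists_abs_sum_mul_le_abs hx d
  refine ⟨ℓ, ?_⟩
  have hsum : ∑ s ∈ I, (u ℓ (c s) - ∑ a, Pact D W a * u ℓ a) = -(N * d ℓ) := by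
    rw [sum_sub_distrib, sum_const, hI, nsmul_eq_mul]
    simp only [d]
    field_simp
    ring
  rw [hsum, abs_neg, abs_mul, abs_of_pos hNpos]
  rw [hlin] at h
  exact mul_lt_mul_of_pos_left (h.trans_le hℓ) hNpos

end Game

lemma natCast_mul_mul_two_mul_exp_le (L T : ℕ) :
    ((T : ℝ) * (T * L)) * (2 * Real.exp (-(2 * ((L : ℝ) + 1) * Real.log (3 * T)))) ≤
      1 / (T : ℝ) ^ 2 := by
  rcases Nat.eq_zero_or_pos T with rfl | hT
  · simp
  rcases Nat.eq_zero_or_pos L with rfl | hL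
  · simp
  have hT1 : (1 : ℝ) ≤ T := by exact_mod_cast hT
  have hexp : Real.exp (-(2 * ((L : ℝ) + 1) * Real.log (3 * T))) =
      ((3 * (T : ℝ)) ^ (2 * L + 2))⁻¹ := by
    rw [Real.exp_neg, show 2 * ((L : ℝ) + 1) = ((2 * L + 2 : ℕ) : ℝ) by push_cast; ring,
      ← Real.log_pow, Real.exp_log (by positivity)]
  have hcoeff : 2 * (L : ℝ) ≤ 3 ^ (2 * L + 2) := by
    exact_mod_cast (Nat.lt_pow_self (by norm_num : 1 < 3) : 2 * L + 2 < 3 ^ (2 * L + 2)).le.trans'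
      (by omega)
  have hpow : 2 * (L : ℝ) * T ^ 4 ≤ (3 * T) ^ (2 * L + 2) := by
    rw [mul_pow]
    exact mul_le_mul hcoeff (pow_le_pow_right₀ hT1 (by omega)) (by positivity) (by positivity)
  rw [hexp]
  calc ((T : ℝ) * (T * L)) * (2 * ((3 * (T : ℝ)) ^ (2 * L + 2))⁻¹)
      = 2 * L * T ^ 4 / (3 * T) ^ (2 * L + 2) / T ^ 2 := by field_simp
    _ ≤ 1 / T ^ 2 := by
      gcongr
      exact (div_le_one (by positivity)).2 hpow

open Classical in
theorem stmt14_general (n L A K T : ℕ)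
    (D : (Fin n → Fin K) → ℝ) (hD : IsDist D)
    (u : Fin L → (Fin n → Fin A) → ℝ) (hu : ∀ ℓ a, u ℓ a ∈ Set.Icc (0 : ℝ) 1)
    (br : (Fin n → Fin K) → (Fin L → ℝ) → (Fin n → Fin A))
    (hTW : ({W : Fin n → Fin K → Fin A | (BRregion br W).Nonempty}.ncard : ℕ) ≤ T) :
    1 - 1 / (T : ℝ) ^ 2 ≤
      ∑ ω : (Fin n → Fin K → Fin A) → Fin T → (Fin n → Fin A),
        if (∀ W : Fin n → Fin K → Fin A, (BRregion br W).Nonempty →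
              ∀ N : ℕ, 1 ≤ N → N ≤ T → ∀ x ∈ BRregion br W,
                |UReg D u W x -
                    (1 / (N : ℝ)) *
                      ∑ s : Fin T, (if (s : ℕ) < N then leaderU u x (ω W s) else 0)| ≤
                  Real.sqrt (4 * ((L : ℝ) + 1) * Real.log (3 * (T : ℝ)) / (N : ℝ)))
        then ∏ W : Fin n → Fin K → Fin A, ∏ s : Fin T, Pact D W (ω W s)
        else 0 := by
  set 𝓦 := univ.filter fun W : Fin n → Fin K → Fin A => (BRregion br W).Nonempty
  set ε : ℕ → ℝ := fun N => Real.sqrt (4 * ((L : ℝ) + 1) * Real.log (3 * (T : ℝ)) / (N : ℝ))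
  have hcard : #𝓦 ≤ T := by
    rwa [Set.ncard_eq_toFinset_card', Set.toFinset_ofPred] at hTW
  have hε : ∀ N : ℕ, 1 ≤ N → (N : ℝ) * ε N ^ 2 / 2 = 2 * ((L : ℝ) + 1) * Real.log (3 * T) := by
    intro N hN
    have hNpos : (0 : ℝ) < N := by exact_mod_cast hN
    have hlog : 0 ≤ Real.log (3 * (T : ℝ)) := by exact_mod_cast Real.log_natCast_nonneg (3 * T)
    rw [Real.sq_sqrt (by positivity)]
    field_simp
    ring
  have hdist :=
    IsDist.pi fun W : Fin n → Fin K → Fin A => IsDist.pi fun _ : Fin T => isDist_pact hD W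
  refine hdist.one_sub_le_sum_ite _ ?_
  calc _ ≤ ∑ i ∈ 𝓦 ×ˢ Icc 1 T ×ˢ (univ : Finset (Fin L)),
        ∑ ω ∈ univ.filter (fun ω : (Fin n → Fin K → Fin A) → Fin T → Fin n → Fin A =>
          i.2.1 * ε i.2.1 <
            |∑ s ∈ univ.filter (fun s : Fin T => (s : ℕ) < i.2.1),
              (u i.2.2 (ω i.1 s) - ∑ a, Pact D i.1 a * u i.2.2 a)|),
          ∏ W, ∏ s, Pact D W (ω W s) := by
        refine sum_filter_le_sum_sum_filter hdist.1 fun ω hbad => ?_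
        push Not at hbad
        obtain ⟨W, hW, N, hN, hNT, x, hx, hdev⟩ := hbad
        obtain ⟨ℓ, hℓ⟩ := exists_lt_abs_sum_sub_of_lt_abs_UReg_sub hN hNT D u W hx.1 (ω W) hdev
        exact ⟨(W, N, ℓ), by simp [𝓦, hW, hN, hNT], hℓ⟩
    _ ≤ ∑ i ∈ 𝓦 ×ˢ Icc 1 T ×ˢ (univ : Finset (Fin L)),
        2 * Real.exp (-(2 * ((L : ℝ) + 1) * Real.log (3 * T))) := by
        refine sum_le_sum fun i hi => ?_
        have hN : 1 ≤ i.2.1 ∧ i.2.1 ≤ T := by simpa using (mem_product.1 (mem_product.1 hi).2).1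
        have := sum_prod_prod_filter_lt_abs_sum_sub_le (ε := ε i.2.1) (fun W => isDist_pact hD W)
          i.1 (hu i.2.2) (univ.filter fun s : Fin T => (s : ℕ) < i.2.1) (Real.sqrt_nonneg _)
        rwa [Fin.card_filter_val_lt, min_eq_right hN.2, hε _ hN.1] at this
    _ ≤ 1 / (T : ℝ) ^ 2 := by
        rw [sum_const, nsmul_eq_mul, card_product, card_product, Nat.card_Icc, card_univ,
          Fintype.card_fin, Nat.add_sub_cancel]
        refine le_trans ?_ (natCast_mul_mul_two_mul_exp_le L T)
        push_cast
        gcongr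

open Classical in
theorem stmt14 (n L A K T : ℕ) (hn : 1 ≤ n) (hL : 2 ≤ L) (hT : 1 ≤ T)
    (D : (Fin n → Fin K) → ℝ) (hD : IsDist D)
    (u : Fin L → (Fin n → Fin A) → ℝ) (hu : ∀ ℓ a, u ℓ a ∈ Set.Icc (0 : ℝ) 1)
    (v : Fin n → Fin L → Fin A → Fin K → ℝ)
    (hv : ∀ i ℓ a k, v i ℓ a k ∈ Set.Icc (0 : ℝ) 1)
    (br : (Fin n → Fin K) → (Fin L → ℝ) → (Fin n → Fin A)) (hbr : IsBR u v br)
    (hTW : ({W : Fin n → Fin K → Fin A | (BRregion br W).Nonempty}.ncard : ℕ) ≤ T) :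
    1 - 1 / (T : ℝ) ^ 2 ≤
      ∑ ω : (Fin n → Fin K → Fin A) → Fin T → (Fin n → Fin A),
        if (∀ W : Fin n → Fin K → Fin A, (BRregion br W).Nonempty →
              ∀ N : ℕ, 1 ≤ N → N ≤ T → ∀ x ∈ BRregion br W,
                |UReg D u W x -
                    (1 / (N : ℝ)) *
                      ∑ s : Fin T, (if (s : ℕ) < N then leaderU u x (ω W s) else 0)| ≤
                  Real.sqrt (4 * ((L : ℝ) + 1) * Real.log (3 * (T : ℝ)) / (N : ℝ)))
        then ∏ W : Fin n → Fin K → Fin A, ∏ s : Fin T, Pact D W (ω W s)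
        else 0 :=
  stmt14_general n L A K T D hD u hu br hTW
end
end
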